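/- arXiv:2409.13942 — 7 statements merged into one kernel-verified Lean document; each statement's English description precedes it below -/
import Mathlib

section
/- The spectrum of the discrete Laplacian −Δ_h, viewed as a bounded linear operator on the complex Hilbert space ℓ²(ℤ, ℂ), is exactly the interval [0, 4/h²]: the spectrum (over ℂ) of −Δ_h equals the image of the real interval [0, 4/h²] under the canonical embedding ℝ → ℂ. -/
/-!
On `ℓ²(ℤ, ℂ)` the operator is `h⁻² (2 - S - S⋆)` for the bilateral shift `S`, i.e. the continuous
functional calculus of the unitary `S` applied to the symbol `z ↦ h⁻² (2 - z - z̄)`. Conjugating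
`S` by the modulation `φ n ↦ wⁿ φ n` (`‖w‖ = 1`) turns it into `w • S`, so the spectrum of `S` is a
nonempty rotation-invariant subset of the unit circle, hence the whole circle. By the spectral
mapping theorem the spectrum of the operator is the image of the circle under the symbol,
`{h⁻² (2 - 2 cos θ)} = [0, 4/h²]`.
-/

open scoped ENNReal lp
open Complex Metric ContinuousLinearMap

section Reindex

variable {ι κ 𝕜 E : Type*} [NormedAddCommGroup E] {p : ℝ≥0∞}

theorem Memℓp.comp_equiv {f : κ → E} (hf : Memℓp f p) (e : ι ≃ κ) : Memℓp (f ∘ e) p := by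
  obtain rfl | rfl | hp := p.trichotomy
  · rw [memℓp_zero_iff] at hf ⊢
    exact hf.preimage e.injective.injOn
  · rw [memℓp_infty_iff] at hf ⊢
    rwa [show (Set.range fun i => ‖(f ∘ e) i‖) = Set.range fun k => ‖f k‖ from
      e.surjective.range_comp (fun k => ‖f k‖)]
  · rw [memℓp_gen_iff hp] at hf ⊢
    exact e.summable_iff.mpr hf

variable [Fact (1 ≤ p)]

theorem lp.norm_comp_equiv_le (f : lp (fun _ : κ => E) p) (e : ι ≃ κ) :
    ‖(⟨f ∘ e, (lp.memℓp f).comp_equiv e⟩ : lp (fun _ : ι => E) p)‖ ≤ ‖f‖ := by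
  have hp : p ≠ 0 := (zero_lt_one.trans_le Fact.out).ne'
  obtain rfl | hp' := eq_or_ne p ∞
  · exact lp.norm_le_of_forall_le (norm_nonneg f) fun i => lp.norm_apply_le_norm hp f (e i)
  · refine lp.norm_le_of_forall_sum_le (ENNReal.toReal_pos hp hp') (norm_nonneg f) fun s => ?_
    have := lp.sum_rpow_le_norm_rpow (ENNReal.toReal_pos hp hp') f (s.map e.toEmbedding)
    rw [Finset.sum_map] at this
    exact this

variable [NormedField 𝕜] [NormedSpace 𝕜 E]

variable (𝕜 E p) in
def lp.compEquiv (e : ι ≃ κ) : lp (fun _ : κ => E) p ≃ₗᵢ[𝕜] lp (fun _ : ι => E) p where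
  toFun f := ⟨f ∘ e, (lp.memℓp f).comp_equiv e⟩
  invFun f := ⟨f ∘ e.symm, (lp.memℓp f).comp_equiv e.symm⟩
  map_add' f g := rfl
  map_smul' c f := rfl
  left_inv f := lp.ext <| funext fun k => congrArg f (e.apply_symm_apply k)
  right_inv f := lp.ext <| funext fun i => congrArg f (e.symm_apply_apply i)
  norm_map' f := by
    refine le_antisymm (lp.norm_comp_equiv_le f e) ?_
    let g : lp (fun _ : ι => E) p := ⟨f ∘ e, (lp.memℓp f).comp_equiv e⟩
    have hf : f = ⟨g ∘ e.symm, (lp.memℓp g).comp_equiv e.symm⟩ := by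
      ext k
      exact (congrArg f (e.apply_symm_apply k)).symm
    exact (congrArg norm hf).trans_le (lp.norm_comp_equiv_le g e.symm)

end Reindex

section Unimodular

variable {ι 𝕜 E : Type*} [NormedField 𝕜] [NormedAddCommGroup E] [NormedSpace 𝕜 E]
  {p : ℝ≥0∞}

theorem Memℓp.smul_unimodular {u : ι → 𝕜} (hu : ∀ i, ‖u i‖ = 1) {f : ι → E} (hf : Memℓp f p) :
    Memℓp (fun i => u i • f i) p :=
  hf.mono' fun i => by rw [norm_smul, hu, one_mul]

variable [Fact (1 ≤ p)]

variable (E p) in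
def lp.smulUnimodular (u : ι → 𝕜) (hu : ∀ i, ‖u i‖ = 1) :
    lp (fun _ : ι => E) p ≃ₗᵢ[𝕜] lp (fun _ : ι => E) p where
  toFun f := ⟨fun i => u i • f i, (lp.memℓp f).smul_unimodular hu⟩
  invFun f := ⟨fun i => (u i)⁻¹ • f i,
    (lp.memℓp f).smul_unimodular fun i => by rw [norm_inv, hu, inv_one]⟩
  map_add' f g := lp.ext <| funext fun i => smul_add (u i) (f i) (g i)
  map_smul' c f := lp.ext <| funext fun i => smul_comm (u i) c (f i)
  left_inv f := lp.ext <| funext fun i => inv_smul_smul₀ (norm_ne_zero_iff.mp (by simp [hu])) (f i)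
  right_inv f := lp.ext <| funext fun i => smul_inv_smul₀ (norm_ne_zero_iff.mp (by simp [hu])) (f i)
  norm_map' f := by
    have hp : p ≠ 0 := (zero_lt_one.trans_le Fact.out).ne'
    exact le_antisymm (lp.norm_mono hp fun i => by simp [norm_smul, hu])
      (lp.norm_mono hp fun i => by simp [norm_smul, hu])

end Unimodular

theorem Complex.re_image_sphere_zero_one : re '' sphere (0 : ℂ) 1 = Set.Icc (-1) 1 := by
  ext t
  constructor
  · rintro ⟨z, hz, rfl⟩
    exact abs_le.mp ((abs_re_le_norm z).trans (mem_sphere_zero_iff_norm.mp hz).le)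
  · rintro ⟨ht₁, ht₂⟩
    refine ⟨exp (Real.arccos t * I), by simp [norm_exp_ofReal_mul_I], ?_⟩
    rw [exp_ofReal_mul_I_re, Real.cos_arccos ht₁ ht₂]

theorem spectrum_eq_sphere_of_forall_smul_conj {A : Type*} [NormedRing A] [NormedAlgebra ℂ A]
    [CompleteSpace A] [Nontrivial A] {a : A} (ha : spectrum ℂ a ⊆ sphere 0 1)
    (hconj : ∀ w : ℂ, ‖w‖ = 1 → ∃ v : Aˣ, v * a * v⁻¹ = w • a) :
    spectrum ℂ a = sphere 0 1 := by
  refine ha.antisymm fun w hw => ?_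
  obtain ⟨z, hz⟩ := spectrum.nonempty a
  have hz1 : ‖z‖ = 1 := mem_sphere_zero_iff_norm.mp (ha hz)
  have hw1 : ‖w‖ = 1 := mem_sphere_zero_iff_norm.mp hw
  obtain ⟨v, hv⟩ := hconj (w / z) (by rw [norm_div, hz1, hw1, div_one])
  have hmem : w / z * z ∈ spectrum ℂ (v * a * v⁻¹) := by
    rw [hv, spectrum.smul_eq_smul _ _ ⟨z, hz⟩]
    exact Set.smul_mem_smul_set hz
  rwa [spectrum.units_conjugate,
    div_mul_cancel₀ w (norm_ne_zero_iff.mp (hz1.trans_ne one_ne_zero))] at hmem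

instance lp.nontrivial {ι E : Type*} [Nonempty ι] [NormedAddCommGroup E] [Nontrivial E]
    {p : ℝ≥0∞} : Nontrivial (lp (fun _ : ι => E) p) := by
  obtain ⟨x, hx⟩ := exists_ne (0 : E)
  classical
  inhabit ι
  refine nontrivial_of_ne (lp.single p default x) 0 fun h => hx ?_
  simpa using congrArg (fun f : lp (fun _ : ι => E) p => f default) h

noncomputable def bilateralShift : unitary (ℓ²(ℤ, ℂ) →L[ℂ] ℓ²(ℤ, ℂ)) :=
  Unitary.linearIsometryEquiv.symm (lp.compEquiv ℂ ℂ 2 (Equiv.addRight 1))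

@[simp]
theorem bilateralShift_apply (φ : ℓ²(ℤ, ℂ)) (n : ℤ) :
    (bilateralShift : ℓ²(ℤ, ℂ) →L[ℂ] ℓ²(ℤ, ℂ)) φ n = φ (n + 1) := rfl

@[simp]
theorem star_bilateralShift_apply (φ : ℓ²(ℤ, ℂ)) (n : ℤ) :
    star (bilateralShift : ℓ²(ℤ, ℂ) →L[ℂ] ℓ²(ℤ, ℂ)) φ n = φ (n - 1) := by
  rw [star_eq_adjoint, bilateralShift, Unitary.coe_symm_linearIsometryEquiv_apply,
    LinearIsometryEquiv.adjoint_eq_symm]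
  rfl

noncomputable def modulation (w : ℂ) (hw : ‖w‖ = 1) : unitary (ℓ²(ℤ, ℂ) →L[ℂ] ℓ²(ℤ, ℂ)) :=
  Unitary.linearIsometryEquiv.symm
    (lp.smulUnimodular ℂ 2 (fun n : ℤ => w ^ n) fun n => by rw [norm_zpow, hw, one_zpow])

@[simp]
theorem modulation_apply (w : ℂ) (hw : ‖w‖ = 1) (φ : ℓ²(ℤ, ℂ)) (n : ℤ) :
    (modulation w hw : ℓ²(ℤ, ℂ) →L[ℂ] ℓ²(ℤ, ℂ)) φ n = w ^ n * φ n := rfl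

theorem bilateralShift_mul_modulation (w : ℂ) (hw : ‖w‖ = 1) :
    (bilateralShift * modulation w hw : ℓ²(ℤ, ℂ) →L[ℂ] ℓ²(ℤ, ℂ)) =
      w • (modulation w hw * bilateralShift : ℓ²(ℤ, ℂ) →L[ℂ] ℓ²(ℤ, ℂ)) := by
  have hw0 : w ≠ 0 := norm_ne_zero_iff.mp (hw.trans_ne one_ne_zero)
  ext φ n
  simp only [mul_apply_eq_comp, bilateralShift_apply, modulation_apply, zpow_add_one₀ hw0,
    smul_apply, lp.coeFn_smul, Pi.smul_apply, smul_eq_mul]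
  ring

theorem spectrum_bilateralShift :
    spectrum ℂ (bilateralShift : ℓ²(ℤ, ℂ) →L[ℂ] ℓ²(ℤ, ℂ)) = sphere 0 1 := by
  refine spectrum_eq_sphere_of_forall_smul_conj
    (spectrum.subset_circle_of_unitary bilateralShift.prop) fun w hw => ?_
  let U := Unitary.toUnits (modulation w hw)
  refine ⟨U⁻¹, ?_⟩
  rw [inv_inv, mul_assoc, Unitary.val_toUnits_apply, bilateralShift_mul_modulation, mul_smul_comm,
    ← mul_assoc, ← Unitary.val_toUnits_apply, Units.inv_mul, one_mul]

noncomputable def laplacianSymbol (h : ℝ) (z : ℂ) : ℂ := ((h : ℂ) ^ 2)⁻¹ * (2 - z - star z)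

theorem eq_cfc_bilateralShift {h : ℝ} (H : ℓ²(ℤ, ℂ) →L[ℂ] ℓ²(ℤ, ℂ))
    (hH : ∀ (φ : ℓ²(ℤ, ℂ)) (n : ℤ),
      H φ n = ((h : ℂ) ^ 2)⁻¹ * (2 * φ n - φ (n + 1) - φ (n - 1))) :
    H = cfc (laplacianSymbol h) (bilateralShift : ℓ²(ℤ, ℂ) →L[ℂ] ℓ²(ℤ, ℂ)) := by
  set S : ℓ²(ℤ, ℂ) →L[ℂ] ℓ²(ℤ, ℂ) := (bilateralShift : ℓ²(ℤ, ℂ) →L[ℂ] ℓ²(ℤ, ℂ))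
  unfold laplacianSymbol
  rw [cfc_const_mul _ (fun z : ℂ => 2 - z - star z),
    cfc_sub (fun z : ℂ => 2 - z) star, cfc_sub (fun _ : ℂ => 2) (fun z : ℂ => z), cfc_const 2 S,
    cfc_id' ℂ S, cfc_star_id (a := S), Algebra.algebraMap_eq_smul_one]
  ext φ n
  simp only [hH, smul_apply, sub_apply, lp.coeFn_smul, lp.coeFn_sub, Pi.smul_apply, Pi.sub_apply,
    one_apply_eq_self, S, bilateralShift_apply, star_bilateralShift_apply, smul_eq_mul]

theorem laplacianSymbol_image_sphere {h : ℝ} (hh : 0 < h) :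
    laplacianSymbol h '' sphere 0 1 = (fun x : ℝ => (x : ℂ)) '' Set.Icc 0 (4 / h ^ 2) := by
  have hsymbol : laplacianSymbol h =
      (fun x : ℝ => (x : ℂ)) ∘ (fun t : ℝ => (2 - 2 * t) / h ^ 2) ∘ re := by
    funext z
    rw [laplacianSymbol, Function.comp_apply, Function.comp_apply, star_def, sub_sub, add_conj]
    push_cast
    ring
  have hh2 : 0 < h ^ 2 := by positivity
  have haffine : (fun t : ℝ => (2 - 2 * t) / h ^ 2) '' Set.Icc (-1) 1 = Set.Icc 0 (4 / h ^ 2) := by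
    ext x
    simp only [Set.mem_image, Set.mem_Icc]
    constructor
    · rintro ⟨t, ⟨ht₁, ht₂⟩, rfl⟩
      exact ⟨div_nonneg (by linarith) hh2.le, div_le_div_of_nonneg_right (by linarith) hh2.le⟩
    · rintro ⟨hx₁, hx₂⟩
      rw [le_div_iff₀ hh2] at hx₂
      refine ⟨1 - x * h ^ 2 / 2, ⟨by nlinarith, by nlinarith⟩, ?_⟩
      field_simp
      ring
  rw [hsymbol, Set.image_comp, Set.image_comp, re_image_sphere_zero_one, haffine]

/-- The spectrum of the discrete Laplacian `−Δ_h` on `ℓ²(ℤ, ℂ)`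
is exactly the interval `[0, 4/h²]` (embedded in `ℂ`). -/
theorem stmt_0 (h : ℝ) (hh : 0 < h)
    (H : lp (fun _ : ℤ => ℂ) 2 →L[ℂ] lp (fun _ : ℤ => ℂ) 2)
    (hH : ∀ (φ : lp (fun _ : ℤ => ℂ) 2) (n : ℤ),
      H φ n = ((h : ℂ) ^ 2)⁻¹ * (2 * φ n - φ (n + 1) - φ (n - 1))) :
    spectrum ℂ H = (fun x : ℝ => (x : ℂ)) '' Set.Icc 0 (4 / h ^ 2) := by
  rw [eq_cfc_bilateralShift H hH, cfc_map_spectrum (hf := by unfold laplacianSymbol; fun_prop),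
    spectrum_bilateralShift, laplacianSymbol_image_sphere hh]
end

section
/- The discrete Laplacian −Δ_h on ℓ²(ℤ, ℂ) has no eigenvalues: for every μ ∈ ℂ there is no nonzero φ ∈ ℓ²(ℤ, ℂ) with (−Δ_h)φ = μ·φ. -/
/-!
An eigenvector `ψ` of `−Δ_h` with eigenvalue `μ` solves the recurrence
`ψ (n + 2) + ψ n = c * ψ (n + 1)` with `c = 2 - μ h²`. Along any solution the quantity
`ψ (n + 1) ^ 2 - ψ n * ψ (n + 2)` is independent of `n`; since `ψ ∈ ℓ²` decays at `±∞`, it is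
zero. Hence `|ψ|` is log-convex, `|ψ (n + 1)|² = |ψ n| |ψ (n + 2)|`. If `ψ ≠ 0`, `|ψ|` attains a
positive maximum, log-convexity propagates the maximum to both neighbours and so to all of `ℤ`,
contradicting decay.
-/

open Filter Topology

theorem Memℓp.tendsto_norm_cofinite_zero {α : Type*} {E : α → Type*}
    [∀ i, NormedAddCommGroup (E i)] {p : ENNReal} {f : ∀ i, E i} (hf : Memℓp f p)
    (hp : 0 < p.toReal) :
    Tendsto (fun i => ‖f i‖) cofinite (𝓝 0) := by
  have hroot := ((Real.continuousAt_rpow_const 0 _ (Or.inr (inv_pos.2 hp).le)).tendsto).comp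
    (hf.summable hp).tendsto_cofinite_zero
  rw [Real.zero_rpow (inv_pos.2 hp).ne'] at hroot
  simpa [Function.comp_def, Real.rpow_rpow_inv (norm_nonneg _) hp.ne'] using hroot

theorem exists_forall_ge_of_tendsto_cofinite_zero {α : Type*} {g : α → ℝ}
    (hg : Tendsto g cofinite (𝓝 0)) {a : α} (ha : 0 < g a) : ∃ a₀, ∀ b, g b ≤ g a₀ := by
  set s := {b | ¬ g b < g a}
  have hfin : s.Finite := eventually_cofinite.1 (hg.eventually (gt_mem_nhds ha))
  obtain ⟨a₀, ha₀, hmax⟩ := s.exists_max_image g hfin ⟨a, lt_irrefl _⟩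
  refine ⟨a₀, fun b => ?_⟩
  by_cases hb : b ∈ s
  · exact hmax b hb
  · exact (not_not.1 hb).le.trans (hmax a (lt_irrefl _))

theorem Int.eq_zero_of_sq_le_mul_of_tendsto_cofinite {g : ℤ → ℝ} (hg₀ : ∀ n, 0 ≤ g n)
    (hconv : ∀ n, g (n + 1) ^ 2 ≤ g n * g (n + 2)) (hlim : Tendsto g cofinite (𝓝 0)) :
    g = 0 := by
  by_contra hne
  obtain ⟨n₁, hn₁⟩ := Function.ne_iff.1 hne
  obtain ⟨n₀, hmax⟩ := exists_forall_ge_of_tendsto_cofinite_zero hlim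
    ((hg₀ n₁).lt_of_ne' hn₁)
  have hM : 0 < g n₀ := ((hg₀ n₁).lt_of_ne' hn₁).trans_le (hmax n₁)
  have hspread : ∀ n, g (n + 1) = g n₀ → g n = g n₀ ∧ g (n + 2) = g n₀ := by
    intro n hn
    have := hconv n
    rw [hn] at this
    constructor <;> nlinarith [hmax n, hmax (n + 2), hg₀ n, hg₀ (n + 2)]
  have hconst : ∀ k : ℤ, g (n₀ + k) = g n₀ := by
    intro k
    induction k using Int.induction_on with
    | zero => simp
    | succ k ih =>
      simpa [show n₀ + k - 1 + 2 = n₀ + (k + 1) by ring] using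
        (hspread (n₀ + k - 1) (by simpa using ih)).2
    | pred k ih =>
      rw [← add_sub_assoc]
      exact (hspread (n₀ + -k - 1) (by simpa using ih)).1
  have : Tendsto (fun _ : ℤ => g n₀) cofinite (𝓝 0) :=
    hlim.congr fun n => by simpa using hconst (n - n₀)
  exact hM.ne' (tendsto_const_nhds_iff.1 this)

section Recurrence

variable {R : Type*} [CommRing R] {ψ : ℤ → R} {c : R}

theorem periodic_sq_sub_mul_of_recurrence (hrec : ∀ n, ψ (n + 2) + ψ n = c * ψ (n + 1)) :
    Function.Periodic (fun n => ψ (n + 1) ^ 2 - ψ n * ψ (n + 2)) 1 := by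
  intro n
  have h1 := hrec n
  have h2 := hrec (n + 1)
  simp only [show n + 1 + 1 = n + 2 by ring, show n + 1 + 2 = n + 3 by ring] at h2 ⊢
  linear_combination ψ (n + 2) * h1 - ψ (n + 1) * h2

theorem sq_eq_mul_of_recurrence_of_tendsto [TopologicalSpace R] [IsTopologicalRing R] [T2Space R]
    (hrec : ∀ n, ψ (n + 2) + ψ n = c * ψ (n + 1)) (hlim : Tendsto ψ cofinite (𝓝 0)) (n : ℤ) :
    ψ (n + 1) ^ 2 = ψ n * ψ (n + 2) := by
  have hshift (k : ℤ) : Tendsto (fun n => ψ (n + k)) cofinite (𝓝 0) :=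
    hlim.comp (add_left_injective k).tendsto_cofinite
  have hW : Tendsto (fun n => ψ (n + 1) ^ 2 - ψ n * ψ (n + 2)) cofinite (𝓝 0) := by
    simpa using ((hshift 1).pow 2).sub (hlim.mul (hshift 2))
  have hperiodic := periodic_sq_sub_mul_of_recurrence hrec
  have hW₀ : ψ 1 ^ 2 - ψ 0 * ψ 2 = 0 := by
    refine tendsto_const_nhds_iff.1 (hW.congr fun m => ?_)
    simpa using hperiodic.int_mul_eq m
  have hWn := hperiodic.int_mul_eq n
  simp only [Int.cast_id, mul_one, zero_add] at hWn
  rwa [hW₀, sub_eq_zero] at hWn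

end Recurrence

theorem Int.eq_zero_of_recurrence_of_tendsto_cofinite {𝕜 : Type*} [NormedField 𝕜]
    {ψ : ℤ → 𝕜} {c : 𝕜} (hrec : ∀ n, ψ (n + 2) + ψ n = c * ψ (n + 1))
    (hlim : Tendsto ψ cofinite (𝓝 0)) :
    ψ = 0 := by
  have hnorm := Int.eq_zero_of_sq_le_mul_of_tendsto_cofinite (g := fun n => ‖ψ n‖)
    (fun n => norm_nonneg _)
    (fun n => by rw [← norm_pow, sq_eq_mul_of_recurrence_of_tendsto hrec hlim n, norm_mul])
    (tendsto_zero_iff_norm_tendsto_zero.1 hlim)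
  funext n
  simpa using congrFun hnorm n

/-- The discrete Laplacian `−Δ_h` on `ℓ²(ℤ, ℂ)` has no eigenvalues. -/
theorem stmt_1 (h : ℝ) (hh : 0 < h)
    (H : lp (fun _ : ℤ => ℂ) 2 →L[ℂ] lp (fun _ : ℤ => ℂ) 2)
    (hH : ∀ (φ : lp (fun _ : ℤ => ℂ) 2) (n : ℤ),
      H φ n = ((h : ℂ) ^ 2)⁻¹ * (2 * φ n - φ (n + 1) - φ (n - 1))) :
    ∀ μ : ℂ, ¬ ∃ φ : lp (fun _ : ℤ => ℂ) 2, φ ≠ 0 ∧ H φ = μ • φ := by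
  rintro μ ⟨φ, hφ, hHφ⟩
  have hh2 : (h : ℂ) ^ 2 ≠ 0 := by exact_mod_cast (pow_pos hh 2).ne'
  have hrec : ∀ n, φ (n + 2) + φ n = (2 - μ * h ^ 2) * φ (n + 1) := by
    intro n
    have hn := hH φ (n + 1)
    rw [hHφ, lp.coeFn_smul, Pi.smul_apply, smul_eq_mul, show n + 1 + 1 = n + 2 by ring,
      add_sub_cancel_right, eq_inv_mul_iff_mul_eq₀ hh2] at hn
    linear_combination hn
  have hdecay : Tendsto (fun n => φ n) cofinite (𝓝 0) :=
    tendsto_zero_iff_norm_tendsto_zero.2 (φ.prop.tendsto_norm_cofinite_zero (by norm_num))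
  exact hφ (lp.ext (Int.eq_zero_of_recurrence_of_tendsto_cofinite hrec hdecay))
end

section
/- For every w ∈ ℂ with Im w > 0 and every t ∈ ℝ, one has sin²(t/2) ≠ sin²(w/2), the family (exp(i·w·|n| − i·n·t))_{n ∈ ℤ} is summable in ℂ, and ∑_{n ∈ ℤ} exp(i·w·|n| − i·n·t) = −(i/2) · sin(w) / (sin²(t/2) − sin²(w/2)). -/
/-!
With `q = exp (i w)` and `z = exp (-i t)` one has `|q| < 1 = |z|`, and the summand is
`q ^ |n| * z ^ n`. Splitting the sum at `n = 0` gives two geometric series, whose total is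
`(1 - q²) / ((1 - q z) (1 - q / z))`. Writing sines through exponentials, the numerator is
`4 q · (-(i/2) sin w)` and the denominator is `4 q · (sin²(t/2) - sin²(w/2))`; the latter is
nonzero because `|q z|, |q / z| < 1`.
-/

open Complex

theorem hasSum_pow_natAbs_mul_zpow {𝕜 : Type*} [NormedField 𝕜] [CompleteSpace 𝕜] {q z : 𝕜}
    (hz : z ≠ 0) (h₁ : ‖q * z‖ < 1) (h₂ : ‖q * z⁻¹‖ < 1) :
    HasSum (fun n : ℤ => q ^ n.natAbs * z ^ n)
      ((1 - q ^ 2) / ((1 - q * z) * (1 - q * z⁻¹))) := by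
  have hnonneg : HasSum (fun n : ℕ => q ^ (n : ℤ).natAbs * z ^ (n : ℤ)) (1 - q * z)⁻¹ := by
    simp only [Int.natAbs_natCast, zpow_natCast, ← mul_pow]
    exact hasSum_geometric_of_norm_lt_one h₁
  have hneg : HasSum (fun n : ℕ => q ^ (-(n + 1 : ℤ)).natAbs * z ^ (-(n + 1 : ℤ)))
      (q * z⁻¹ * (1 - q * z⁻¹)⁻¹) := by
    have hterm (n : ℕ) : q ^ (-(n + 1 : ℤ)).natAbs * z ^ (-(n + 1 : ℤ)) =
        q * z⁻¹ * (q * z⁻¹) ^ n := by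
      rw [← pow_succ', mul_pow, zpow_neg, inv_pow]
      norm_cast
    simp only [hterm]
    exact (hasSum_geometric_of_norm_lt_one h₂).mul_left (q * z⁻¹)
  have h₁' := (isUnit_one_sub_of_norm_lt_one h₁).ne_zero
  have h₂' := (isUnit_one_sub_of_norm_lt_one h₂).ne_zero
  -- `f` must be given: higher-order unification against `f (-(n + 1))` times out
  convert HasSum.of_nat_of_neg_add_one (f := fun n : ℤ => q ^ n.natAbs * z ^ n) hnonneg hneg
    using 1
  have hq : q ^ 2 = q * z * (q * z⁻¹) := by field_simp
  rw [hq]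
  generalize q * z = a, q * z⁻¹ = b at *
  field_simp
  ring

theorem Complex.sin_half_sq_sub_sin_half_sq (x y : ℂ) :
    sin (x / 2) ^ 2 - sin (y / 2) ^ 2 =
      (1 - exp (y * I) * exp (-(x * I))) * (1 - exp (y * I) * exp (x * I)) / (4 * exp (y * I)) := by
  have hx : exp (x * I) = exp (x / 2 * I) ^ 2 := by rw [← exp_nat_mul]; ring_nf
  have hy : exp (y * I) = exp (y / 2 * I) ^ 2 := by rw [← exp_nat_mul]; ring_nf
  have := exp_ne_zero (x / 2 * I)
  have := exp_ne_zero (y / 2 * I)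
  rw [exp_neg, hx, hy, sin, sin, neg_mul, neg_mul, exp_neg, exp_neg]
  field_simp
  ring_nf
  rw [I_sq]
  ring

theorem Complex.neg_I_div_two_mul_sin (y : ℂ) :
    -(I / 2) * sin y = (1 - exp (y * I) ^ 2) / (4 * exp (y * I)) := by
  have := exp_ne_zero (y * I)
  rw [sin, neg_mul y, exp_neg]
  field_simp
  ring_nf
  rw [I_sq]
  ring

theorem Complex.exp_I_mul_abs_sub (w x : ℂ) (n : ℤ) :
    exp (I * w * ((|n| : ℤ) : ℂ) - I * n * x) = exp (w * I) ^ n.natAbs * exp (-(x * I)) ^ n := by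
  rw [← exp_nat_mul, ← exp_int_mul, ← exp_add, Nat.cast_natAbs]
  ring_nf

/-- For `w ∈ ℂ` with `Im w > 0` and `t ∈ ℝ`, one has
`sin²(t/2) ≠ sin²(w/2)`, the family `(exp(i·w·|n| − i·n·t))_{n ∈ ℤ}` is summable, and
`∑_{n ∈ ℤ} exp(i·w·|n| − i·n·t) = −(i/2)·sin w / (sin²(t/2) − sin²(w/2))`. -/
theorem stmt_3 (w : ℂ) (hw : 0 < w.im) (t : ℝ) :
    Complex.sin ((t : ℂ) / 2) ^ 2 ≠ Complex.sin (w / 2) ^ 2 ∧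
    Summable (fun n : ℤ =>
      Complex.exp (Complex.I * w * ((|n| : ℤ) : ℂ) - Complex.I * (n : ℂ) * (t : ℂ))) ∧
    ∑' n : ℤ, Complex.exp (Complex.I * w * ((|n| : ℤ) : ℂ) - Complex.I * (n : ℂ) * (t : ℂ)) =
      -(Complex.I / 2) * Complex.sin w /
        (Complex.sin ((t : ℂ) / 2) ^ 2 - Complex.sin (w / 2) ^ 2) := by
  simp only [exp_I_mul_abs_sub]
  set q := exp (w * I)
  set z := exp (-(t * I))
  have hz_inv : z⁻¹ = exp (t * I) := by rw [← exp_neg, neg_neg]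
  have hz : ‖z‖ = 1 := by simp [z, norm_exp]
  have hq : ‖q‖ < 1 := by simpa [q, norm_exp] using hw
  have h₁ : ‖q * z‖ < 1 := by rwa [norm_mul, hz, mul_one]
  have h₂ : ‖q * z⁻¹‖ < 1 := by rwa [norm_mul, norm_inv, hz, inv_one, mul_one]
  have hsum := hasSum_pow_natAbs_mul_zpow (exp_ne_zero _) h₁ h₂
  have h4q : 4 * q ≠ 0 := mul_ne_zero (by norm_num) (exp_ne_zero _)
  have hden : sin ((t : ℂ) / 2) ^ 2 - sin (w / 2) ^ 2 ≠ 0 := by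
    rw [sin_half_sq_sub_sin_half_sq, ← hz_inv]
    exact div_ne_zero (mul_ne_zero (isUnit_one_sub_of_norm_lt_one h₁).ne_zero
      (isUnit_one_sub_of_norm_lt_one h₂).ne_zero) h4q
  refine ⟨sub_ne_zero.mp hden, hsum.summable, ?_⟩
  rw [hsum.tsum_eq, neg_I_div_two_mul_sin, sin_half_sq_sub_sin_half_sq, ← hz_inv,
    div_div_div_cancel_right₀ h4q]
end

section
/- Let ν₁, ν₂, β₁, β₂ > 1 and C > 0. Let V be a bounded positive operator on the Hilbert space ℓ²(ℤ × ℕ, ℂ) (positive meaning self-adjoint with ⟨V x, x⟩ ≥ 0 for all x), whose matrix entries v((n,j),(m,k)) := ⟨δ_{(n,j)}, V δ_{(m,k)}⟩ satisfy |v((n,j),(m,k))| ≤ C·(1+j²)^{−β₁/2}·(1+k²)^{−β₂/2}·(1+n²)^{−ν₁/2}·(1+m²)^{−ν₂/2} for all n, m ∈ ℤ and j, k ∈ ℕ. Set ν₀ := min(ν₁, ν₂) and β₀ := min(β₁, β₂). Then there exists a bounded positive operator 𝒱 on ℓ²(ℤ × ℕ, ℂ) whose matrix entries are ⟨δ_{(n,j)},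 𝒱 δ_{(m,k)}⟩ = (1+n²)^{ν₀/4}·(1+j²)^{β₀/4}·v((n,j),(m,k))·(1+k²)^{β₀/4}·(1+m²)^{ν₀/4}; consequently V = D ∘ 𝒱 ∘ D, where D is the bounded diagonal operator with D δ_{(n,j)} = (1+n²)^{−ν₀/4}·(1+j²)^{−β₀/4}·δ_{(n,j)}. -/
/-!
Put `w (n, j) = (1 + n²)^(ν₀/4) (1 + j²)^(β₀/4)`. Since `ν₀/4 - ν₁/2 ≤ -ν₁/4 < -1/4` (and likewise
for the other three exponents), the decay hypothesis makes the kernel `w a · v a b · w b` square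
summable over pairs, so it is the matrix of a bounded (Hilbert–Schmidt) operator `𝒱`, and
`V = D 𝒱 D` for the diagonal operator `D = w⁻¹` because both sides have the same matrix.
`D` is self-adjoint and its range contains every basis vector, hence is dense; so
`⟪𝒱 (D y), D y⟫ = ⟪V y, y⟫ ≥ 0` extends by continuity to `⟪𝒱 x, x⟫ ≥ 0` for all `x`. In a complex
Hilbert space this makes `𝒱` positive, in particular self-adjoint.
-/

open scoped InnerProductSpace lp ComplexOrder

theorem summable_norm_sq_of_norm_le_mul {α β E : Type*} [SeminormedAddCommGroup E]
    {K : α → β → E} {f : α → ℝ} {g : β → ℝ} (hK : ∀ a b, ‖K a b‖ ≤ f a * g b)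
    (hf : Summable fun a => f a ^ 2) (hg : Summable fun b => g b ^ 2) :
    Summable fun p : α × β => ‖K p.1 p.2‖ ^ 2 :=
  (hf.mul_of_nonneg hg (fun _ => sq_nonneg _) (fun _ => sq_nonneg _)).of_nonneg_of_le
    (fun _ => sq_nonneg _) fun p => by
      rw [← mul_pow]
      exact pow_le_pow_left₀ (norm_nonneg _) (hK p.1 p.2) 2

theorem ContinuousLinearMap.IsPositive.of_comp_comp {E : Type*} [NormedAddCommGroup E]
    [InnerProductSpace ℂ E] [CompleteSpace E] {T D : E →L[ℂ] E} (hD : IsSelfAdjoint D)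
    (hDense : DenseRange D) (hDTD : (D ∘L T ∘L D).IsPositive) : T.IsPositive := by
  have hrange : ∀ y, 0 ≤ ⟪T (D y), D y⟫_ℂ := fun y => by
    simpa [← ContinuousLinearMap.adjoint_inner_right, hD.adjoint_eq] using
      hDTD.inner_nonneg_left y
  have hall : ∀ x, 0 ≤ ⟪T x, x⟫_ℂ :=
    isClosed_property hDense (isClosed_le continuous_const (T.continuous.inner continuous_id))
      hrange
  rw [ContinuousLinearMap.isPositive_iff_complex]
  intro x
  obtain ⟨hre, him⟩ := Complex.nonneg_iff.mp (hall x)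
  exact ⟨Complex.ext rfl (by simp [him]), hre⟩

namespace lp

variable {ι 𝕜 : Type*} [RCLike 𝕜]

theorem norm_sq_eq_tsum (x : ℓ²(ι, 𝕜)) : ‖x‖ ^ 2 = ∑' i, ‖x i‖ ^ 2 := by
  simpa using lp.norm_rpow_eq_tsum (p := 2) (by norm_num) x

theorem memℓp_two_of_summable {f : ι → 𝕜} (hf : Summable fun i => ‖f i‖ ^ 2) : Memℓp f 2 :=
  memℓp_gen (by simpa using hf)

theorem summable_norm_sq (x : ℓ²(ι, 𝕜)) : Summable fun i => ‖x i‖ ^ 2 := by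
  simpa using (lp.memℓp x).summable (p := 2) (by norm_num)

variable [DecidableEq ι]

noncomputable def matrixEntry (T : ℓ²(ι, 𝕜) →L[𝕜] ℓ²(ι, 𝕜)) (i j : ι) : 𝕜 :=
  ⟪lp.single 2 i 1, T (lp.single 2 j 1)⟫_𝕜

theorem inner_single_one_left (i : ι) (x : ℓ²(ι, 𝕜)) : ⟪lp.single 2 i 1, x⟫_𝕜 = x i := by
  simp [lp.inner_single_left]

theorem matrixEntry_eq_apply (T : ℓ²(ι, 𝕜) →L[𝕜] ℓ²(ι, 𝕜)) (i j : ι) :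
    matrixEntry T i j = T (lp.single 2 j 1) i :=
  inner_single_one_left i _

theorem ext_single_one {A B : ℓ²(ι, 𝕜) →L[𝕜] ℓ²(ι, 𝕜)}
    (h : ∀ i, A (lp.single 2 i 1) = B (lp.single 2 i 1)) : A = B := by
  refine lp.ext_continuousLinearMap ENNReal.ofNat_ne_top fun i =>
    ContinuousLinearMap.ext fun c => ?_
  have hc : (lp.single 2 i c : ℓ²(ι, 𝕜)) = c • lp.single 2 i 1 := by
    rw [← lp.single_smul, smul_eq_mul, mul_one]
  simp only [ContinuousLinearMap.comp_apply, lp.singleContinuousLinearMap_apply, hc, map_smul, h]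

theorem ext_matrixEntry {A B : ℓ²(ι, 𝕜) →L[𝕜] ℓ²(ι, 𝕜)}
    (h : ∀ i j, matrixEntry A i j = matrixEntry B i j) : A = B :=
  ext_single_one fun j => lp.ext <| funext fun i => by
    simpa only [matrixEntry_eq_apply] using h i j

theorem matrixEntry_adjoint (T : ℓ²(ι, 𝕜) →L[𝕜] ℓ²(ι, 𝕜)) (i j : ι) :
    matrixEntry (ContinuousLinearMap.adjoint T) i j = star (matrixEntry T j i) := by
  rw [matrixEntry, ContinuousLinearMap.adjoint_inner_right, ← inner_conj_symm]
  rfl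

theorem isSelfAdjoint_of_apply_single {D : ℓ²(ι, 𝕜) →L[𝕜] ℓ²(ι, 𝕜)} {d : ι → ℝ}
    (hD : ∀ i, D (lp.single 2 i 1) = (d i : 𝕜) • lp.single 2 i 1) : IsSelfAdjoint D := by
  have hentry : ∀ i j, matrixEntry D i j = if i = j then (d i : 𝕜) else 0 := by
    intro i j
    rw [matrixEntry_eq_apply, hD, lp.coeFn_smul, Pi.smul_apply, lp.single_apply, Pi.single_apply]
    split_ifs with h <;> simp [h]
  refine ContinuousLinearMap.isSelfAdjoint_iff'.mpr (ext_matrixEntry fun i j => ?_)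
  rw [matrixEntry_adjoint, hentry, hentry]
  split_ifs with h h' h' <;> simp_all

theorem exists_matrixEntry_eq (K : ι → ι → 𝕜) (hK : Summable fun p : ι × ι => ‖K p.1 p.2‖ ^ 2) :
    ∃ T : ℓ²(ι, 𝕜) →L[𝕜] ℓ²(ι, 𝕜), ∀ i j, matrixEntry T i j = K i j := by
  let r : ι → ℓ²(ι, 𝕜) := fun i =>
    ⟨fun j => star (K i j), memℓp_two_of_summable (by simpa using hK.prod_factor i)⟩
  have hr : Summable fun i => ‖r i‖ ^ 2 := by
    simpa [norm_sq_eq_tsum, r] using hK.prod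
  have hbound : ∀ x i, ‖⟪r i, x⟫_𝕜‖ ^ 2 ≤ ‖r i‖ ^ 2 * ‖x‖ ^ 2 := fun x i => by
    rw [← mul_pow]
    exact pow_le_pow_left₀ (norm_nonneg _) (norm_inner_le_norm _ _) 2
  have hsum : ∀ x : ℓ²(ι, 𝕜), Summable fun i => ‖⟪r i, x⟫_𝕜‖ ^ 2 := fun x =>
    .of_nonneg_of_le (fun _ => sq_nonneg _) (hbound x) (hr.mul_right _)
  let T : ℓ²(ι, 𝕜) →ₗ[𝕜] ℓ²(ι, 𝕜) :=
    { toFun := fun x => ⟨fun i => ⟪r i, x⟫_𝕜, memℓp_two_of_summable (hsum x)⟩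
      map_add' := fun x y => lp.ext <| funext fun i => inner_add_right _ _ _
      map_smul' := fun c x => lp.ext <| funext fun i => inner_smul_right _ _ _ }
  have hT : ∀ x, ‖T x‖ ≤ √(∑' i, ‖r i‖ ^ 2) * ‖x‖ := fun x => by
    refine le_of_sq_le_sq ?_ (by positivity)
    rw [mul_pow, Real.sq_sqrt (tsum_nonneg fun _ => sq_nonneg _), norm_sq_eq_tsum,
      ← tsum_mul_right]
    exact (hsum x).tsum_le_tsum (hbound x) (hr.mul_right _)
  refine ⟨T.mkContinuous _ hT, fun i j => ?_⟩
  rw [matrixEntry_eq_apply]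
  change ⟪r i, lp.single 2 j 1⟫_𝕜 = K i j
  simp [lp.inner_single_right, r]

theorem exists_apply_single_eq_smul {d : ι → ℝ} {M : ℝ} (hd : ∀ i, |d i| ≤ M) :
    ∃ D : ℓ²(ι, 𝕜) →L[𝕜] ℓ²(ι, 𝕜), ∀ i, D (lp.single 2 i 1) = (d i : 𝕜) • lp.single 2 i 1 := by
  have hbound : ∀ (x : ℓ²(ι, 𝕜)) i, ‖(d i : 𝕜) * x i‖ ^ 2 ≤ M ^ 2 * ‖x i‖ ^ 2 := fun x i => by
    rw [norm_mul, RCLike.norm_ofReal, mul_pow]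
    gcongr
    exact hd i
  have hsum : ∀ x : ℓ²(ι, 𝕜), Summable fun i => ‖(d i : 𝕜) * x i‖ ^ 2 := fun x =>
    .of_nonneg_of_le (fun _ => sq_nonneg _) (hbound x) ((summable_norm_sq x).mul_left _)
  let D : ℓ²(ι, 𝕜) →ₗ[𝕜] ℓ²(ι, 𝕜) :=
    { toFun := fun x => ⟨fun i => (d i : 𝕜) * x i, memℓp_two_of_summable (hsum x)⟩
      map_add' := fun x y => lp.ext <| funext fun i => mul_add _ (x i) (y i)
      map_smul' := fun c x => lp.ext <| funext fun i => mul_left_comm _ c (x i) }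
  have hD : ∀ x, ‖D x‖ ≤ |M| * ‖x‖ := fun x => by
    rw [← abs_norm (D x), ← abs_norm x, ← abs_mul, ← sq_le_sq, mul_pow, norm_sq_eq_tsum,
      norm_sq_eq_tsum, ← tsum_mul_left]
    exact (hsum x).tsum_le_tsum (hbound x) ((summable_norm_sq x).mul_left _)
  refine ⟨D.mkContinuous _ hD, fun j => lp.ext <| funext fun i => ?_⟩
  change (d i : 𝕜) * (lp.single 2 j (1 : 𝕜) : ℓ²(ι, 𝕜)) i = _
  rw [lp.coeFn_smul, Pi.smul_apply, lp.single_apply, Pi.single_apply]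
  split_ifs with h <;> simp [h]

theorem matrixEntry_comp_comp_of_apply_single {D : ℓ²(ι, 𝕜) →L[𝕜] ℓ²(ι, 𝕜)} {d : ι → ℝ}
    (hD : ∀ i, D (lp.single 2 i 1) = (d i : 𝕜) • lp.single 2 i 1)
    (T : ℓ²(ι, 𝕜) →L[𝕜] ℓ²(ι, 𝕜)) (i j : ι) :
    matrixEntry (D ∘L T ∘L D) i j = d i * matrixEntry T i j * d j := by
  have hDsa := ContinuousLinearMap.isSelfAdjoint_iff'.mp (isSelfAdjoint_of_apply_single hD)
  rw [matrixEntry, ContinuousLinearMap.comp_apply, ContinuousLinearMap.comp_apply, hD, map_smul,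
    ← hDsa, ContinuousLinearMap.adjoint_inner_right, hD, inner_smul_left, inner_smul_right,
    RCLike.conj_ofReal, matrixEntry]
  ring

theorem denseRange_of_apply_single {D : ℓ²(ι, 𝕜) →L[𝕜] ℓ²(ι, 𝕜)} {d : ι → ℝ}
    (hD : ∀ i, D (lp.single 2 i 1) = (d i : 𝕜) • lp.single 2 i 1) (hd : ∀ i, d i ≠ 0) :
    DenseRange D := by
  have hsingle : ∀ i (c : 𝕜),
      (lp.single 2 i c : ℓ²(ι, 𝕜)) ∈ LinearMap.range (D : ℓ²(ι, 𝕜) →ₗ[𝕜] ℓ²(ι, 𝕜)) := fun i c =>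
    ⟨(c / d i) • lp.single 2 i 1, by
      rw [ContinuousLinearMap.coe_coe, map_smul, hD, smul_smul,
        div_mul_cancel₀ _ (RCLike.ofReal_ne_zero.mpr (hd i)), ← lp.single_smul, smul_eq_mul,
        mul_one]⟩
  intro x
  exact mem_closure_of_tendsto (lp.hasSum_single ENNReal.ofNat_ne_top x)
    (.of_forall fun s => Submodule.sum_mem _ fun i _ => hsingle i (x i))

theorem eq_comp_comp_of_matrixEntry_eq {V T D : ℓ²(ι, 𝕜) →L[𝕜] ℓ²(ι, 𝕜)} {w : ι → ℝ}
    (hw : ∀ i, w i ≠ 0) (hT : ∀ i j, matrixEntry T i j = w i * matrixEntry V i j * w j)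
    (hD : ∀ i, D (lp.single 2 i 1) = (((w i)⁻¹ : ℝ) : 𝕜) • lp.single 2 i 1) : V = D ∘L T ∘L D :=
  ext_matrixEntry fun i j => by
    have hwi : (w i : 𝕜) ≠ 0 := RCLike.ofReal_ne_zero.mpr (hw i)
    have hwj : (w j : 𝕜) ≠ 0 := RCLike.ofReal_ne_zero.mpr (hw j)
    rw [matrixEntry_comp_comp_of_apply_single hD, hT]
    push_cast
    field_simp

theorem isPositive_of_matrixEntry_eq {V T : ℓ²(ι, ℂ) →L[ℂ] ℓ²(ι, ℂ)} {w : ι → ℝ} {M : ℝ}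
    (hV : V.IsPositive) (hw : ∀ i, 0 < w i) (hM : ∀ i, (w i)⁻¹ ≤ M)
    (hT : ∀ i j, matrixEntry T i j = w i * matrixEntry V i j * w j) : T.IsPositive := by
  obtain ⟨D, hD⟩ := exists_apply_single_eq_smul (𝕜 := ℂ) (d := fun i => (w i)⁻¹) fun i => by
    rw [abs_of_pos (inv_pos.mpr (hw i))]
    exact hM i
  exact .of_comp_comp (isSelfAdjoint_of_apply_single hD)
    (denseRange_of_apply_single hD fun i => inv_ne_zero (hw i).ne')
    (eq_comp_comp_of_matrixEntry_eq (fun i => (hw i).ne') hT hD ▸ hV)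

end lp

theorem Real.summable_one_add_sq_rpow_int {q : ℝ} (hq : q < -(1 / 2)) :
    Summable fun n : ℤ => (1 + (n : ℝ) ^ 2) ^ q := by
  refine (Real.summable_abs_int_rpow (b := -(2 * q)) (by linarith)).of_norm_bounded_eventually ?_
  filter_upwards [Filter.eventually_cofinite_ne 0] with n hn
  have hpos : 0 < (n : ℝ) ^ 2 := by positivity
  rw [Real.norm_of_nonneg (by positivity), neg_neg, Real.rpow_mul (abs_nonneg _),
    Real.rpow_two, sq_abs]
  exact Real.rpow_le_rpow_of_nonpos hpos (by linarith) (by linarith)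

theorem Real.summable_one_add_sq_rpow_nat {q : ℝ} (hq : q < -(1 / 2)) :
    Summable fun j : ℕ => (1 + (j : ℝ) ^ 2) ^ q :=
  ((Real.summable_one_add_sq_rpow_int hq).comp_injective Nat.cast_injective).congr fun j => by
    simp

noncomputable def weight (s t : ℝ) (a : ℤ × ℕ) : ℝ :=
  (1 + (a.1 : ℝ) ^ 2) ^ s * (1 + (a.2 : ℝ) ^ 2) ^ t

theorem weight_pos (s t : ℝ) (a : ℤ × ℕ) : 0 < weight s t a := by
  unfold weight; positivity

theorem weight_add (s s' t t' : ℝ) (a : ℤ × ℕ) :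
    weight (s + s') (t + t') a = weight s t a * weight s' t' a := by
  simp only [weight, Real.rpow_add (by positivity : (0 : ℝ) < 1 + (a.1 : ℝ) ^ 2),
    Real.rpow_add (by positivity : (0 : ℝ) < 1 + (a.2 : ℝ) ^ 2)]
  ring

theorem weight_neg (s t : ℝ) (a : ℤ × ℕ) : weight (-s) (-t) a = (weight s t a)⁻¹ := by
  simp only [weight, Real.rpow_neg (by positivity : (0 : ℝ) ≤ 1 + (a.1 : ℝ) ^ 2),
    Real.rpow_neg (by positivity : (0 : ℝ) ≤ 1 + (a.2 : ℝ) ^ 2), mul_inv]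

theorem weight_le_one {s t : ℝ} (hs : s ≤ 0) (ht : t ≤ 0) (a : ℤ × ℕ) : weight s t a ≤ 1 :=
  mul_le_one₀ (Real.rpow_le_one_of_one_le_of_nonpos (le_add_of_nonneg_right (sq_nonneg _)) hs)
    (by positivity) (Real.rpow_le_one_of_one_le_of_nonpos (le_add_of_nonneg_right (sq_nonneg _)) ht)

theorem summable_weight_sq {s t : ℝ} (hs : s < -(1 / 4)) (ht : t < -(1 / 4)) :
    Summable fun a => weight s t a ^ 2 := by
  refine ((Real.summable_one_add_sq_rpow_int (q := 2 * s) (by linarith)).mul_of_nonneg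
    (Real.summable_one_add_sq_rpow_nat (q := 2 * t) (by linarith))
    (fun _ => by positivity) (fun _ => by positivity)).congr fun a => ?_
  rw [sq (weight s t a), ← weight_add, ← two_mul, ← two_mul]
  rfl

theorem exists_matrixEntry_eq_weight_mul_weight (v : ℤ × ℕ → ℤ × ℕ → ℂ)
    {C s t s₁ t₁ s₂ t₂ : ℝ} (hv : ∀ a b, ‖v a b‖ ≤ C * weight s₁ t₁ a * weight s₂ t₂ b)
    (hs₁ : s + s₁ < -(1 / 4)) (ht₁ : t + t₁ < -(1 / 4))
    (hs₂ : s + s₂ < -(1 / 4)) (ht₂ : t + t₂ < -(1 / 4)) :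
    ∃ T : ℓ²(ℤ × ℕ, ℂ) →L[ℂ] ℓ²(ℤ × ℕ, ℂ),
      ∀ a b, lp.matrixEntry T a b = weight s t a * v a b * weight s t b := by
  have hK : ∀ a b, ‖(weight s t a : ℂ) * v a b * weight s t b‖ ≤
      (C * weight (s + s₁) (t + t₁) a) * weight (s + s₂) (t + t₂) b := by
    intro a b
    have ha := weight_pos s t a
    have hb := weight_pos s t b
    simp only [norm_mul, Complex.norm_real, Real.norm_of_nonneg ha.le, Real.norm_of_nonneg hb.le,
      weight_add]
    calc _ ≤ weight s t a * (C * weight s₁ t₁ a * weight s₂ t₂ b) * weight s t b := by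
          gcongr
          exact hv a b
      _ = _ := by ring
  have hleft : Summable fun a => (C * weight (s + s₁) (t + t₁) a) ^ 2 := by
    simpa only [mul_pow] using (summable_weight_sq hs₁ ht₁).mul_left (C ^ 2)
  obtain ⟨T, hT⟩ := lp.exists_matrixEntry_eq (𝕜 := ℂ) _
    (summable_norm_sq_of_norm_le_mul hK hleft (summable_weight_sq hs₂ ht₂))
  exact ⟨T, hT⟩

theorem stmt_6_general (ν₁ ν₂ β₁ β₂ C : ℝ) (hν₁ : 1 < ν₁) (hν₂ : 1 < ν₂) (hβ₁ : 1 < β₁) (hβ₂ : 1 < β₂)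
    (V : lp (fun _ : ℤ × ℕ => ℂ) 2 →L[ℂ] lp (fun _ : ℤ × ℕ => ℂ) 2)
    (hVsa : IsSelfAdjoint V)
    (hVpos : ∀ x : lp (fun _ : ℤ × ℕ => ℂ) 2, 0 ≤ (⟪V x, x⟫_ℂ).re)
    (hVbound : ∀ (n m : ℤ) (j k : ℕ),
      ‖⟪lp.single 2 ((n, j) : ℤ × ℕ) (1 : ℂ), V (lp.single 2 ((m, k) : ℤ × ℕ) (1 : ℂ))⟫_ℂ‖ ≤
        C * (1 + (j : ℝ) ^ 2) ^ (-(β₁ / 2)) * (1 + (k : ℝ) ^ 2) ^ (-(β₂ / 2)) *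
          (1 + (n : ℝ) ^ 2) ^ (-(ν₁ / 2)) * (1 + (m : ℝ) ^ 2) ^ (-(ν₂ / 2))) :
    ∃ 𝒱 : lp (fun _ : ℤ × ℕ => ℂ) 2 →L[ℂ] lp (fun _ : ℤ × ℕ => ℂ) 2,
      IsSelfAdjoint 𝒱 ∧
      (∀ x : lp (fun _ : ℤ × ℕ => ℂ) 2, 0 ≤ (⟪𝒱 x, x⟫_ℂ).re) ∧
      (∀ (n m : ℤ) (j k : ℕ),
        ⟪lp.single 2 ((n, j) : ℤ × ℕ) (1 : ℂ), 𝒱 (lp.single 2 ((m, k) : ℤ × ℕ) (1 : ℂ))⟫_ℂ =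
          (((1 + (n : ℝ) ^ 2) ^ (min ν₁ ν₂ / 4) * (1 + (j : ℝ) ^ 2) ^ (min β₁ β₂ / 4) : ℝ) : ℂ) *
            ⟪lp.single 2 ((n, j) : ℤ × ℕ) (1 : ℂ), V (lp.single 2 ((m, k) : ℤ × ℕ) (1 : ℂ))⟫_ℂ *
          (((1 + (k : ℝ) ^ 2) ^ (min β₁ β₂ / 4) * (1 + (m : ℝ) ^ 2) ^ (min ν₁ ν₂ / 4) : ℝ) : ℂ)) ∧
      ∀ D : lp (fun _ : ℤ × ℕ => ℂ) 2 →L[ℂ] lp (fun _ : ℤ × ℕ => ℂ) 2,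
        (∀ (n : ℤ) (j : ℕ),
          D (lp.single 2 ((n, j) : ℤ × ℕ) (1 : ℂ)) =
            (((1 + (n : ℝ) ^ 2) ^ (-(min ν₁ ν₂ / 4)) * (1 + (j : ℝ) ^ 2) ^ (-(min β₁ β₂ / 4)) :
                ℝ) : ℂ) • lp.single 2 ((n, j) : ℤ × ℕ) (1 : ℂ)) →
        V = D ∘L 𝒱 ∘L D := by
  set ν₀ := min ν₁ ν₂
  set β₀ := min β₁ β₂
  have hν₀ : 1 < ν₀ ∧ ν₀ ≤ ν₁ ∧ ν₀ ≤ ν₂ := ⟨lt_min hν₁ hν₂, min_le_left _ _, min_le_right _ _⟩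
  have hβ₀ : 1 < β₀ ∧ β₀ ≤ β₁ ∧ β₀ ≤ β₂ := ⟨lt_min hβ₁ hβ₂, min_le_left _ _, min_le_right _ _⟩
  have hv : ∀ a b, ‖lp.matrixEntry V a b‖ ≤
      C * weight (-(ν₁ / 2)) (-(β₁ / 2)) a * weight (-(ν₂ / 2)) (-(β₂ / 2)) b := fun a b =>
    (hVbound a.1 b.1 a.2 b.2).trans_eq (by simp only [weight]; ring)
  obtain ⟨T, hT⟩ := exists_matrixEntry_eq_weight_mul_weight (s := ν₀ / 4) (t := β₀ / 4) _ hv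
    (by linarith) (by linarith) (by linarith) (by linarith)
  have hT_pos : T.IsPositive := lp.isPositive_of_matrixEntry_eq
    (ContinuousLinearMap.isPositive_def'.mpr ⟨hVsa, hVpos⟩) (weight_pos _ _)
    (fun a => weight_neg (ν₀ / 4) (β₀ / 4) a ▸ weight_le_one (by linarith) (by linarith) a) hT
  refine ⟨T, hT_pos.isSelfAdjoint, hT_pos.re_inner_nonneg_left, fun n m j k => ?_, fun D hD => ?_⟩
  · change lp.matrixEntry T (n, j) (m, k) = _ * lp.matrixEntry V (n, j) (m, k) * _
    rw [hT]
    simp only [weight]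
    push_cast
    ring
  · refine lp.eq_comp_comp_of_matrixEntry_eq (fun a => (weight_pos _ _ a).ne') hT fun a => ?_
    rw [← weight_neg]
    exact hD a.1 a.2

/-- A positive operator on `ℓ²(ℤ × ℕ, ℂ)` with polynomially decaying matrix
entries factorizes as `V = D ∘ 𝒱 ∘ D`, with `𝒱` bounded positive and `D` the diagonal operator
with weights `(1+n²)^{−ν₀/4}·(1+j²)^{−β₀/4}`. -/
theorem stmt_6 (ν₁ ν₂ β₁ β₂ C : ℝ) (hν₁ : 1 < ν₁) (hν₂ : 1 < ν₂) (hβ₁ : 1 < β₁) (hβ₂ : 1 < β₂)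
    (hC : 0 < C)
    (V : lp (fun _ : ℤ × ℕ => ℂ) 2 →L[ℂ] lp (fun _ : ℤ × ℕ => ℂ) 2)
    (hVsa : IsSelfAdjoint V)
    (hVpos : ∀ x : lp (fun _ : ℤ × ℕ => ℂ) 2, 0 ≤ (⟪V x, x⟫_ℂ).re)
    (hVbound : ∀ (n m : ℤ) (j k : ℕ),
      ‖⟪lp.single 2 ((n, j) : ℤ × ℕ) (1 : ℂ), V (lp.single 2 ((m, k) : ℤ × ℕ) (1 : ℂ))⟫_ℂ‖ ≤
        C * (1 + (j : ℝ) ^ 2) ^ (-(β₁ / 2)) * (1 + (k : ℝ) ^ 2) ^ (-(β₂ / 2)) *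
          (1 + (n : ℝ) ^ 2) ^ (-(ν₁ / 2)) * (1 + (m : ℝ) ^ 2) ^ (-(ν₂ / 2))) :
    ∃ 𝒱 : lp (fun _ : ℤ × ℕ => ℂ) 2 →L[ℂ] lp (fun _ : ℤ × ℕ => ℂ) 2,
      IsSelfAdjoint 𝒱 ∧
      (∀ x : lp (fun _ : ℤ × ℕ => ℂ) 2, 0 ≤ (⟪𝒱 x, x⟫_ℂ).re) ∧
      (∀ (n m : ℤ) (j k : ℕ),
        ⟪lp.single 2 ((n, j) : ℤ × ℕ) (1 : ℂ), 𝒱 (lp.single 2 ((m, k) : ℤ × ℕ) (1 : ℂ))⟫_ℂ =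
          (((1 + (n : ℝ) ^ 2) ^ (min ν₁ ν₂ / 4) * (1 + (j : ℝ) ^ 2) ^ (min β₁ β₂ / 4) : ℝ) : ℂ) *
            ⟪lp.single 2 ((n, j) : ℤ × ℕ) (1 : ℂ), V (lp.single 2 ((m, k) : ℤ × ℕ) (1 : ℂ))⟫_ℂ *
          (((1 + (k : ℝ) ^ 2) ^ (min β₁ β₂ / 4) * (1 + (m : ℝ) ^ 2) ^ (min ν₁ ν₂ / 4) : ℝ) : ℂ)) ∧
      ∀ D : lp (fun _ : ℤ × ℕ => ℂ) 2 →L[ℂ] lp (fun _ : ℤ × ℕ => ℂ) 2,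
        (∀ (n : ℤ) (j : ℕ),
          D (lp.single 2 ((n, j) : ℤ × ℕ) (1 : ℂ)) =
            (((1 + (n : ℝ) ^ 2) ^ (-(min ν₁ ν₂ / 4)) * (1 + (j : ℝ) ^ 2) ^ (-(min β₁ β₂ / 4)) :
                ℝ) : ℂ) • lp.single 2 ((n, j) : ℤ × ℕ) (1 : ℂ)) →
        V = D ∘L 𝒱 ∘L D :=
  stmt_6_general ν₁ ν₂ β₁ β₂ C hν₁ hν₂ hβ₁ hβ₂ V hVsa hVpos hVbound
end

section
/- Let h > 0 and ν > 3. Then lim_{λ → 0⁻} ∑_{(n,m) ∈ ℤ×ℤ} (1+n²)^{−ν/2}·(1+m²)^{−ν/2} · ( exp(−2·|n−m|·arsinh((h/2)·√(−λ))) / (√(−λ)·√(4/h² − λ)) − h/(2·√(−λ)) + (h²/2)·|n−m| )² = 0; that is, as λ increases to 0 through negative values, the weighted square-summed difference between the boundary resolvent kernel exp(−2·|n−m|·arsinh((h/2)·√(−λ)))/(√(−λ)·√(4/h²−λ)), the singular kernel h/(2·√(−λ)), and the kernel −(h²/2)·|n−m| tends to 0. -/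
/-!
Put `s = √(-λ)` and `k = |n - m|`. The bracket equals `(φ(s) - φ(0)) / s - φ'(0)` for the profile
`φ(s) = exp (-2k arsinh (hs/2)) / √(4/h² + s²)`, since `φ(0) = h/2` and `φ'(0) = -h²k/2`; hence each
term tends to `0` as `s → 0⁺`. For `0 < s ≤ 1` the bracket is at most `h³/16 + h²k/2` in absolute
value, so the terms are dominated by a multiple of `(1 + n²)^(1 - ν/2) (1 + m²)^(1 - ν/2)`, which
is summable because `ν > 3`, and dominated convergence for series concludes.
-/

open Filter Topology Real

lemma Real.arsinh_le_self {x : ℝ} (hx : 0 ≤ x) : arsinh x ≤ x :=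
  calc arsinh x ≤ arsinh (sinh x) := arsinh_le_arsinh.mpr (self_le_sinh_iff.mpr hx)
    _ = x := arsinh_sinh x

lemma summable_one_add_sq_rpow_neg {r : ℝ} (hr : 1 / 2 < r) :
    Summable fun n : ℤ => (1 + (n : ℝ) ^ 2) ^ (-r) := by
  -- compare with `2^r |n + 1/2|^(-2r)`, using `(n + 1/2)² ≤ 2 (1 + n²)`
  have hsum := ((summable_one_div_int_add_rpow (1 / 2) (2 * r)).mpr (by linarith)).mul_left (2 ^ r)
  refine hsum.of_nonneg_of_le (fun n => by positivity) fun n => ?_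
  have hne : (n : ℝ) + 1 / 2 ≠ 0 := by
    intro h0
    have : (2 * n + 1 : ℤ) = 0 := by exact_mod_cast (by linarith : (2 * n + 1 : ℝ) = 0)
    omega
  have hle : |(n : ℝ) + 1 / 2| ^ (2 * r) ≤ 2 ^ r * (1 + (n : ℝ) ^ 2) ^ r := by
    rw [rpow_mul (abs_nonneg _), rpow_two, sq_abs, ← mul_rpow (by norm_num) (by positivity)]
    exact rpow_le_rpow (sq_nonneg _) (by nlinarith [sq_nonneg ((n : ℝ) - 1 / 2)]) (by linarith)
  have hpos : 0 < |(n : ℝ) + 1 / 2| ^ (2 * r) := rpow_pos_of_pos (abs_pos.mpr hne) _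
  rw [rpow_neg (by positivity), mul_one_div, le_div_iff₀ hpos]
  calc ((1 + (n : ℝ) ^ 2) ^ r)⁻¹ * |(n : ℝ) + 1 / 2| ^ (2 * r)
      ≤ ((1 + (n : ℝ) ^ 2) ^ r)⁻¹ * (2 ^ r * (1 + (n : ℝ) ^ 2) ^ r) := by gcongr
    _ = 2 ^ r := by field_simp

lemma abs_inv_sqrt_sub_half_le {h : ℝ} (hh : 0 < h) (s : ℝ) :
    |1 / √(4 / h ^ 2 + s ^ 2) - h / 2| ≤ h ^ 3 * s ^ 2 / 16 := by
  set q := √(4 / h ^ 2 + s ^ 2)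
  have hq2 : q ^ 2 = 4 / h ^ 2 + s ^ 2 := sq_sqrt (by positivity)
  have hhq2 : (h * q) ^ 2 = 4 + h ^ 2 * s ^ 2 := by rw [mul_pow, hq2]; field_simp
  have hq0 : 0 < q := sqrt_pos.mpr (by positivity)
  have hhq : 2 ≤ h * q := by nlinarith [sq_nonneg (h * s), mul_pos hh hq0]
  have hid : 1 / q - h / 2 = -((h * q - 2) / (2 * q)) := by field_simp; ring
  rw [hid, abs_neg, abs_of_nonneg (by positivity), div_le_iff₀ (by positivity)]
  -- `(hq - 2)(hq + 2) = h²s²` with `hq + 2 ≥ 4`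
  nlinarith [sq_nonneg (h * s), mul_pos hh hq0]

noncomputable def resolventProfile (h k s : ℝ) : ℝ :=
  exp (-2 * k * arsinh (h / 2 * s)) / √(4 / h ^ 2 + s ^ 2)

lemma sqrt_four_div_sq {h : ℝ} (hh : 0 < h) : √(4 / h ^ 2) = 2 / h := by
  rw [show 4 / h ^ 2 = (2 / h) ^ 2 by ring, sqrt_sq (by positivity)]

lemma resolventProfile_zero {h : ℝ} (hh : 0 < h) (k : ℝ) : resolventProfile h k 0 = h / 2 := by
  simp [resolventProfile, sqrt_four_div_sq hh]

lemma hasDerivAt_resolventProfile {h : ℝ} (hh : 0 < h) (k : ℝ) :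
    HasDerivAt (resolventProfile h k) (-(h ^ 2 / 2 * k)) 0 := by
  have hnum : HasDerivAt (fun s => exp (-2 * k * arsinh (h / 2 * s))) (-(h * k)) 0 := by
    convert (((hasDerivAt_id (0 : ℝ)).const_mul (h / 2)).arsinh.const_mul (-2 * k)).exp using 1
    simp only [id_eq]; simp; ring
  have hden : HasDerivAt (fun s => √(4 / h ^ 2 + s ^ 2)) 0 0 := by
    convert ((hasDerivAt_pow 2 (0 : ℝ)).const_add (4 / h ^ 2)).sqrt (by positivity) using 1
    simp
  refine (hnum.div hden (by positivity)).congr_deriv ?_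
  simp [sqrt_four_div_sq hh]
  field_simp

noncomputable def kernelRemainder (h k s : ℝ) : ℝ :=
  exp (-2 * k * arsinh (h / 2 * s)) / (s * √(4 / h ^ 2 + s ^ 2)) - h / (2 * s) + h ^ 2 / 2 * k

lemma kernelRemainder_eq_slope {h : ℝ} (hh : 0 < h) (k : ℝ) {s : ℝ} (hs : s ≠ 0) :
    kernelRemainder h k s =
      s⁻¹ * (resolventProfile h k (0 + s) - resolventProfile h k 0) - -(h ^ 2 / 2 * k) := by
  rw [resolventProfile_zero hh, zero_add, resolventProfile, kernelRemainder]
  field_simp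
  ring

lemma tendsto_kernelRemainder {h : ℝ} (hh : 0 < h) (k : ℝ) :
    Tendsto (kernelRemainder h k) (𝓝[>] 0) (𝓝 0) := by
  have hslope := (hasDerivAt_resolventProfile hh k).tendsto_slope_zero_right.sub_const
    (-(h ^ 2 / 2 * k))
  rw [sub_self] at hslope
  refine hslope.congr' ?_
  filter_upwards [self_mem_nhdsWithin] with s hs
  exact (kernelRemainder_eq_slope hh k (ne_of_gt hs)).symm

lemma abs_kernelRemainder_le {h k s : ℝ} (hh : 0 < h) (hk : 0 ≤ k) (hs0 : 0 < s) (hs1 : s ≤ 1) :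
    |kernelRemainder h k s| ≤ h ^ 3 / 16 + h ^ 2 / 2 * k := by
  have ha0 : 0 ≤ arsinh (h / 2 * s) := arsinh_nonneg_iff.mpr (by positivity)
  have ha : arsinh (h / 2 * s) ≤ h / 2 * s := arsinh_le_self (by positivity)
  rw [kernelRemainder]
  generalize arsinh (h / 2 * s) = a at ha0 ha ⊢
  have hE0 : 0 < exp (-2 * k * a) := exp_pos _
  have hE1 : exp (-2 * k * a) ≤ 1 := exp_le_one_iff.mpr (by nlinarith)
  have hE : 1 - 2 * k * a ≤ exp (-2 * k * a) := by linarith [add_one_le_exp (-2 * k * a)]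
  generalize exp (-2 * k * a) = E at hE0 hE1 hE ⊢
  have hdecomp : E / (s * √(4 / h ^ 2 + s ^ 2)) - h / (2 * s) + h ^ 2 / 2 * k =
      E * ((1 / √(4 / h ^ 2 + s ^ 2) - h / 2) / s) + h / (2 * s) * (E - 1 + h * k * s) := by
    field_simp; ring
  have hfirst : |E * ((1 / √(4 / h ^ 2 + s ^ 2) - h / 2) / s)| ≤ h ^ 3 / 16 := by
    rw [abs_mul, abs_div, abs_of_pos hE0, abs_of_pos hs0]
    calc E * (|1 / √(4 / h ^ 2 + s ^ 2) - h / 2| / s) ≤ 1 * (h ^ 3 * s ^ 2 / 16 / s) := by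
          gcongr
          exact abs_inv_sqrt_sub_half_le hh s
      _ = h ^ 3 / 16 * s := by field_simp
      _ ≤ h ^ 3 / 16 := mul_le_of_le_one_right (by positivity) hs1
  -- `0 ≤ E - 1 + hks ≤ hks` since `1 - hks ≤ 1 - 2ka ≤ E ≤ 1`
  have hsecond : |h / (2 * s) * (E - 1 + h * k * s)| ≤ h ^ 2 / 2 * k := by
    rw [abs_of_nonneg (mul_nonneg (by positivity) (by nlinarith))]
    calc h / (2 * s) * (E - 1 + h * k * s) ≤ h / (2 * s) * (h * k * s) := by gcongr; linarith
      _ = h ^ 2 / 2 * k := by field_simp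
  rw [hdecomp]
  exact (abs_add_le _ _).trans (add_le_add hfirst hsecond)

lemma one_add_abs_sub_sq_le (x y : ℝ) : (1 + |x - y|) ^ 2 ≤ 4 * ((1 + x ^ 2) * (1 + y ^ 2)) := by
  nlinarith [sq_abs (x - y), sq_nonneg (1 - |x - y|), sq_nonneg (x + y), sq_nonneg (x * y)]

lemma tendsto_nhdsGT_sqrt_neg : Tendsto (fun l : ℝ => √(-l)) (𝓝[<] 0) (𝓝[>] 0) := by
  refine tendsto_nhdsWithin_iff.mpr ⟨?_, ?_⟩
  · exact ((continuous_neg.sqrt).tendsto' 0 0 (by simp)).mono_left nhdsWithin_le_nhds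
  · filter_upwards [self_mem_nhdsWithin] with l hl
    exact sqrt_pos.mpr (neg_pos.mpr hl)

lemma sq_kernelRemainder_abs_sub_le {h s : ℝ} (hh : 0 < h) (hs0 : 0 < s) (hs1 : s ≤ 1) (x y : ℝ) :
    kernelRemainder h |x - y| s ^ 2 ≤
      4 * (h ^ 3 / 16 + h ^ 2 / 2) ^ 2 * ((1 + x ^ 2) * (1 + y ^ 2)) := by
  set C := h ^ 3 / 16 + h ^ 2 / 2 with hC
  have hK : |kernelRemainder h |x - y| s| ≤ C * (1 + |x - y|) := by
    refine (abs_kernelRemainder_le hh (abs_nonneg _) hs0 hs1).trans ?_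
    rw [hC]
    nlinarith [mul_nonneg (pow_pos hh 3).le (abs_nonneg (x - y))]
  calc kernelRemainder h |x - y| s ^ 2 ≤ (C * (1 + |x - y|)) ^ 2 := by
        rw [← sq_abs]; gcongr
    _ = C ^ 2 * (1 + |x - y|) ^ 2 := mul_pow _ _ _
    _ ≤ C ^ 2 * (4 * ((1 + x ^ 2) * (1 + y ^ 2))) := by gcongr; exact one_add_abs_sub_sq_le x y
    _ = 4 * C ^ 2 * ((1 + x ^ 2) * (1 + y ^ 2)) := by ring

theorem tendsto_tsum_weighted_kernelRemainder_sq {h ν : ℝ} (hh : 0 < h) (hν : 3 < ν) :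
    Tendsto (fun s => ∑' p : ℤ × ℤ,
        (1 + (p.1 : ℝ) ^ 2) ^ (-(ν / 2)) * (1 + (p.2 : ℝ) ^ 2) ^ (-(ν / 2)) *
          kernelRemainder h ((|p.1 - p.2| : ℤ) : ℝ) s ^ 2)
      (𝓝[>] 0) (𝓝 0) := by
  set w : ℤ → ℝ := fun n => (1 + (n : ℝ) ^ 2) ^ (-(ν / 2))
  set C := h ^ 3 / 16 + h ^ 2 / 2
  have hv : Summable fun n => w n * (1 + (n : ℝ) ^ 2) :=
    (summable_one_add_sq_rpow_neg (r := ν / 2 - 1) (by linarith)).congr fun n => by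
      rw [show -(ν / 2 - 1) = -(ν / 2) + 1 by ring, rpow_add_one (by positivity)]
  have hbound := (hv.mul_of_nonneg hv (fun n => by positivity) (fun n => by positivity)).mul_left
    (4 * C ^ 2)
  rw [show 𝓝 (0 : ℝ) = 𝓝 (∑' _ : ℤ × ℤ, (0 : ℝ)) by rw [tsum_zero]]
  refine tendsto_tsum_of_dominated_convergence hbound (fun p => ?_) ?_
  · simpa using ((tendsto_kernelRemainder hh _).pow 2).const_mul (w p.1 * w p.2)
  · filter_upwards [Ioo_mem_nhdsGT zero_lt_one] with s ⟨hs0, hs1⟩ p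
    have hk : ((|p.1 - p.2| : ℤ) : ℝ) = |(p.1 : ℝ) - p.2| := by push_cast; rfl
    rw [hk, Real.norm_of_nonneg (by positivity)]
    calc w p.1 * w p.2 * kernelRemainder h |(p.1 : ℝ) - p.2| s ^ 2
        ≤ w p.1 * w p.2 * (4 * C ^ 2 * ((1 + (p.1 : ℝ) ^ 2) * (1 + (p.2 : ℝ) ^ 2))) := by
          gcongr
          exact sq_kernelRemainder_abs_sub_le hh hs0 hs1.le _ _
      _ = 4 * C ^ 2 * (w p.1 * (1 + (p.1 : ℝ) ^ 2) * (w p.2 * (1 + (p.2 : ℝ) ^ 2))) := by ring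

/-- As `λ → 0⁻`, the weighted square-summed difference between the boundary
resolvent kernel, the singular kernel `h/(2√(−λ))` and the kernel `−(h²/2)|n−m|` tends to `0`. -/
theorem stmt_9 (h ν : ℝ) (hh : 0 < h) (hν : 3 < ν) :
    Tendsto
      (fun l : ℝ => ∑' p : ℤ × ℤ,
        (1 + (p.1 : ℝ) ^ 2) ^ (-(ν / 2)) * (1 + (p.2 : ℝ) ^ 2) ^ (-(ν / 2)) *
          (Real.exp (-2 * ((|p.1 - p.2| : ℤ) : ℝ) * Real.arsinh (h / 2 * Real.sqrt (-l))) /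
              (Real.sqrt (-l) * Real.sqrt (4 / h ^ 2 - l)) -
            h / (2 * Real.sqrt (-l)) + h ^ 2 / 2 * ((|p.1 - p.2| : ℤ) : ℝ)) ^ 2)
      (nhdsWithin 0 (Set.Iio 0)) (nhds 0) := by
  refine ((tendsto_tsum_weighted_kernelRemainder_sq hh hν).comp tendsto_nhdsGT_sqrt_neg).congr' ?_
  filter_upwards [self_mem_nhdsWithin] with l (hl : l < 0)
  have hq : 4 / h ^ 2 + √(-l) ^ 2 = 4 / h ^ 2 - l := by rw [sq_sqrt (by linarith)]; ring
  simp only [Function.comp_apply, kernelRemainder, hq]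
end

section
/- Let h > 0 and ν > 3. Then lim_{λ → 0⁺} ∑_{(n,m) ∈ ℤ×ℤ} (1+n²)^{−ν/2}·(1+m²)^{−ν/2} · ( sin(2·|n−m|·arcsin((h/2)·√λ)) / (√λ·√(4/h² − λ)) − (h²/2)·|n−m| )² = 0; that is, as λ decreases to 0 through values in (0, 4/h²), the real part kernel of the boundary resolvent, namely −sin(2·|n−m|·arcsin((h/2)·√λ))/(√λ·√(4/h²−λ)), converges in the weighted ℓ²(ℤ×ℤ) sense to the kernel −(h²/2)·|n−m|. -/
/-!
Dominated convergence. Termwise, `sin (2k arcsin (h√λ/2)) / √λ → k h` (the derivative at `0`)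
and `√(4/h² - λ) → 2/h`, so each summand tends to `0`. For `λ ≤ 3/h²`, `|sin x| ≤ |x|` and
`arcsin x ≤ π x / 2` bound the kernel by `2 h² k`, and `(n - m)² ≤ 2 (1 + n²)(1 + m²)` dominates
the series by `∑ (1 + n²)^(1 - ν/2) (1 + m²)^(1 - ν/2)`, which converges as `ν > 3`.
-/

open Filter Real Set Topology

lemma summable_one_add_sq_rpow {s : ℝ} (hs : s < -(1 / 2)) :
    Summable fun n : ℤ => (1 + (n : ℝ) ^ 2) ^ s := by
  have hsum : Summable fun n : ℤ => |(n : ℝ)| ^ (2 * s) := by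
    simpa using summable_abs_int_rpow (b := -(2 * s)) (by linarith)
  refine hsum.of_norm_bounded_eventually ?_
  filter_upwards [eventually_cofinite_ne 0] with n hn
  have hn2 : 0 < (n : ℝ) ^ 2 := by positivity
  calc ‖(1 + (n : ℝ) ^ 2) ^ s‖ = (1 + (n : ℝ) ^ 2) ^ s := by
        rw [norm_of_nonneg (by positivity)]
    _ ≤ ((n : ℝ) ^ 2) ^ s := rpow_le_rpow_of_nonpos hn2 (by linarith) (by linarith)
    _ = |(n : ℝ)| ^ (2 * s) := by
        rw [← sq_abs, ← rpow_natCast_mul (abs_nonneg _)]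
        norm_num

lemma one_add_sq_rpow_mul_sub_sq_le (s a b : ℝ) :
    (1 + a ^ 2) ^ s * (1 + b ^ 2) ^ s * (a - b) ^ 2 ≤
      2 * ((1 + a ^ 2) ^ (s + 1) * (1 + b ^ 2) ^ (s + 1)) := by
  have ha : 0 < 1 + a ^ 2 := by positivity
  have hb : 0 < 1 + b ^ 2 := by positivity
  rw [rpow_add_one ha.ne', rpow_add_one hb.ne']
  calc (1 + a ^ 2) ^ s * (1 + b ^ 2) ^ s * (a - b) ^ 2
      ≤ (1 + a ^ 2) ^ s * (1 + b ^ 2) ^ s * (2 * ((1 + a ^ 2) * (1 + b ^ 2))) := by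
        gcongr
        nlinarith [sq_nonneg (a + b), sq_nonneg (a * b)]
    _ = _ := by ring

lemma arcsin_le_pi_div_two_mul {x : ℝ} (hx₀ : 0 ≤ x) (hx₁ : x ≤ 1) : arcsin x ≤ π / 2 * x := by
  have h := mul_le_sin (arcsin_nonneg.2 hx₀) (arcsin_le_pi_div_two x)
  rw [sin_arcsin (by linarith) hx₁] at h
  rw [div_mul_eq_mul_div, div_le_iff₀ pi_pos] at h
  linarith

/-- Minus the real part of the boundary resolvent kernel at `λ = l`, for `k = |n - m|`. -/
noncomputable def boundaryKernel (h k l : ℝ) : ℝ :=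
  sin (2 * k * arcsin (h / 2 * √l)) / (√l * √(4 / h ^ 2 - l))

lemma tendsto_boundaryKernel {h : ℝ} (hh : 0 < h) (k : ℝ) :
    Tendsto (boundaryKernel h k) (𝓝[>] 0) (𝓝 (h ^ 2 / 2 * k)) := by
  set g : ℝ → ℝ := fun t => sin (2 * k * arcsin (h / 2 * t))
  have hg : HasDerivAt g (k * h) 0 := by
    have hlin : HasDerivAt (fun t : ℝ => h / 2 * t) (h / 2) 0 := by
      simpa using (hasDerivAt_id (0 : ℝ)).const_mul (h / 2)
    refine (((hasDerivAt_arcsin (by norm_num) (by norm_num)).comp 0 hlin).const_mul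
      (2 * k)).sin.congr_deriv ?_
    simp only [Function.comp_apply, mul_zero, arcsin_zero, cos_zero, ne_eq, OfNat.ofNat_ne_zero,
      not_false_eq_true, zero_pow, sub_zero, sqrt_one, one_mul]
    ring
  have hslope : Tendsto (fun t => t⁻¹ * g t) (𝓝[>] 0) (𝓝 (k * h)) := by
    simpa [g] using hg.tendsto_slope_zero_right
  have hsqrt : Tendsto sqrt (𝓝[>] 0) (𝓝[>] 0) := by
    refine tendsto_nhdsWithin_of_tendsto_nhds_of_eventually_within _ ?_ ?_
    · simpa using continuous_sqrt.continuousWithinAt (s := Ioi 0) (x := 0) |>.tendsto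
    · filter_upwards [self_mem_nhdsWithin] with l hl using sqrt_pos.2 hl
  have hroot : Tendsto (fun l => √(4 / h ^ 2 - l)) (𝓝[>] 0) (𝓝 (2 / h)) := by
    have : √(4 / h ^ 2 - 0) = 2 / h := by
      rw [sub_zero, show (4 : ℝ) / h ^ 2 = (2 / h) ^ 2 by ring, sqrt_sq (by positivity)]
    rw [← this]
    exact ((continuous_const.sub continuous_id).sqrt.tendsto 0).mono_left nhdsWithin_le_nhds
  convert (hslope.comp hsqrt).div hroot (by positivity) using 1
  · ext l
    simp only [boundaryKernel, Pi.div_apply, Function.comp_apply, g]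
    ring
  · congr 1; field_simp

lemma abs_boundaryKernel_le {h k l : ℝ} (hh : 0 < h) (hk : 0 ≤ k) (hl₀ : 0 < l)
    (hl : l ≤ 3 / h ^ 2) : |boundaryKernel h k l| ≤ 2 * h ^ 2 * k := by
  have hlh : l * h ^ 2 ≤ 3 := (le_div_iff₀ (by positivity)).1 hl
  set x := h / 2 * √l with hx
  have hx₀ : 0 ≤ x := by positivity
  have hx₁ : x ≤ 1 := by
    refine (pow_le_one_iff_of_nonneg hx₀ two_ne_zero).1 ?_
    rw [mul_pow, sq_sqrt hl₀.le]
    nlinarith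
  have hsin : |sin (2 * k * arcsin x)| ≤ π * k * x := by
    calc |sin (2 * k * arcsin x)| ≤ 2 * k * arcsin x := by
          have harg : 0 ≤ 2 * k * arcsin x := by have := arcsin_nonneg.2 hx₀; positivity
          simpa [abs_of_nonneg harg] using abs_sin_le_abs (x := 2 * k * arcsin x)
      _ ≤ 2 * k * (π / 2 * x) := by gcongr; exact arcsin_le_pi_div_two_mul hx₀ hx₁
      _ = π * k * x := by ring
  have hroot : 1 / h ≤ √(4 / h ^ 2 - l) := by
    rw [le_sqrt' (by positivity), div_pow, one_pow, le_sub_iff_add_le,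
      div_add' _ _ _ (by positivity), div_le_div_iff_of_pos_right (by positivity)]
    linarith
  have hden : 0 < √l * √(4 / h ^ 2 - l) :=
    mul_pos (sqrt_pos.2 hl₀) ((one_div_pos.2 hh).trans_le hroot)
  calc |boundaryKernel h k l| = |sin (2 * k * arcsin x)| / (√l * √(4 / h ^ 2 - l)) := by
        rw [boundaryKernel, abs_div, abs_of_pos hden]
    _ ≤ π * k * x / (√l * (1 / h)) := by gcongr
    _ = π / 2 * h ^ 2 * k := by
        have : √l ≠ 0 := (sqrt_pos.2 hl₀).ne'
        rw [hx]
        field_simp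
    _ ≤ 2 * h ^ 2 * k := by gcongr; linarith [pi_le_four]

lemma sq_boundaryKernel_sub_le {h k l : ℝ} (hh : 0 < h) (hk : 0 ≤ k) (hl₀ : 0 < l)
    (hl : l ≤ 3 / h ^ 2) : (boundaryKernel h k l - h ^ 2 / 2 * k) ^ 2 ≤ 9 * h ^ 4 * k ^ 2 := by
  obtain ⟨hlower, hupper⟩ := abs_le.1 (abs_boundaryKernel_le hh hk hl₀ hl)
  calc (boundaryKernel h k l - h ^ 2 / 2 * k) ^ 2 ≤ (3 * h ^ 2 * k) ^ 2 := by
        apply sq_le_sq' <;> nlinarith [sq_nonneg h]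
    _ = 9 * h ^ 4 * k ^ 2 := by ring

lemma weighted_sq_boundaryKernel_sub_le {h l : ℝ} (hh : 0 < h) (hl₀ : 0 < l)
    (hl : l ≤ 3 / h ^ 2) (s : ℝ) (m n : ℤ) :
    (1 + (m : ℝ) ^ 2) ^ s * (1 + (n : ℝ) ^ 2) ^ s *
        (boundaryKernel h ((|m - n| : ℤ) : ℝ) l - h ^ 2 / 2 * ((|m - n| : ℤ) : ℝ)) ^ 2 ≤
      18 * h ^ 4 * ((1 + (m : ℝ) ^ 2) ^ (s + 1) * (1 + (n : ℝ) ^ 2) ^ (s + 1)) := by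
  have hk : ((|m - n| : ℤ) : ℝ) ^ 2 = ((m : ℝ) - n) ^ 2 := by push_cast; exact sq_abs _
  calc _ ≤ (1 + (m : ℝ) ^ 2) ^ s * (1 + (n : ℝ) ^ 2) ^ s *
        (9 * h ^ 4 * ((|m - n| : ℤ) : ℝ) ^ 2) := by
        gcongr
        exact sq_boundaryKernel_sub_le hh (by positivity) hl₀ hl
    _ = 9 * h ^ 4 * ((1 + (m : ℝ) ^ 2) ^ s * (1 + (n : ℝ) ^ 2) ^ s * ((m : ℝ) - n) ^ 2) := by
        rw [hk]; ring
    _ ≤ 9 * h ^ 4 * (2 * ((1 + (m : ℝ) ^ 2) ^ (s + 1) * (1 + (n : ℝ) ^ 2) ^ (s + 1))) :=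
        mul_le_mul_of_nonneg_left (one_add_sq_rpow_mul_sub_sq_le s m n) (by positivity)
    _ = _ := by ring

/-- As `λ → 0⁺` in `(0, 4/h²)`, the real part kernel of the boundary resolvent
converges, in the weighted `ℓ²(ℤ×ℤ)` sense, to the kernel `−(h²/2)|n−m|`. -/
theorem stmt_10 (h ν : ℝ) (hh : 0 < h) (hν : 3 < ν) :
    Tendsto
      (fun l : ℝ => ∑' p : ℤ × ℤ,
        (1 + (p.1 : ℝ) ^ 2) ^ (-(ν / 2)) * (1 + (p.2 : ℝ) ^ 2) ^ (-(ν / 2)) *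
          (Real.sin (2 * ((|p.1 - p.2| : ℤ) : ℝ) * Real.arcsin (h / 2 * Real.sqrt l)) /
              (Real.sqrt l * Real.sqrt (4 / h ^ 2 - l)) -
            h ^ 2 / 2 * ((|p.1 - p.2| : ℤ) : ℝ)) ^ 2)
      (nhdsWithin 0 (Set.Ioo 0 (4 / h ^ 2))) (nhds 0) := by
  have hF : 𝓝[Ioo 0 (4 / h ^ 2)] (0 : ℝ) ≤ 𝓝[>] 0 := nhdsWithin_mono _ Ioo_subset_Ioi_self
  have hw : Summable fun n : ℤ => (1 + (n : ℝ) ^ 2) ^ (-(ν / 2) + 1) :=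
    summable_one_add_sq_rpow (by linarith)
  have hdom := (hw.mul_of_nonneg hw (fun _ => by positivity) fun _ => by positivity).mul_left
    (18 * h ^ 4)
  have hlim (p : ℤ × ℤ) := ((((tendsto_boundaryKernel hh ((|p.1 - p.2| : ℤ) : ℝ)).sub_const
    (h ^ 2 / 2 * ((|p.1 - p.2| : ℤ) : ℝ))).pow 2).const_mul
    ((1 + (p.1 : ℝ) ^ 2) ^ (-(ν / 2)) * (1 + (p.2 : ℝ) ^ 2) ^ (-(ν / 2)))).mono_left hF
  have hsmall : Iic (3 / h ^ 2) ∈ 𝓝[Ioo 0 (4 / h ^ 2)] (0 : ℝ) :=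
    nhdsWithin_le_nhds (Iic_mem_nhds (by positivity))
  have := tendsto_tsum_of_dominated_convergence hdom hlim <| by
    filter_upwards [self_mem_nhdsWithin, hsmall] with l hl hl₃ p
    rw [norm_of_nonneg (by positivity)]
    exact weighted_sq_boundaryKernel_sub_le hh hl.1 hl₃ _ p.1 p.2
  simp only [sub_self, ne_eq, OfNat.ofNat_ne_zero, not_false_eq_true, zero_pow, mul_zero,
    tsum_zero] at this
  exact this
end

section
/- Let ν > 1, η > 0 and β > 0, and set c := ∑_{n ∈ ℤ} (1+n²)^{−ν/2}. For r > 0 let N(r) := Nat.card {j ∈ ℕ | c·exp(−η·j^β/2) > r}. Then N(r) is finite for each small r > 0 and N(r) = (2/η)^{1/β}·(−log r)^{1/β}·(1 + o(1)) as r → 0⁺; equivalently, lim_{r → 0⁺} N(r)/((2/η)^{1/β}·(−log r)^{1/β}) = 1. -/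
open Filter

private lemma sumZ (ν : ℝ) (hν : 1 < ν) :
    Summable (fun n : ℤ => (1 + (n : ℝ) ^ 2) ^ (-(ν / 2))) := by
  have hnat : Summable (fun n : ℕ => (1 + (n : ℝ) ^ 2) ^ (-(ν / 2))) := by
    rw [← summable_nat_add_iff 1]
    have hg : Summable (fun n : ℕ => ((n:ℝ)+1) ^ (-ν)) := by
      have := (summable_nat_add_iff (f := fun n : ℕ => (n:ℝ) ^ (-ν)) 1).mpr
        (Real.summable_nat_rpow.mpr (by linarith))
      simpa [Nat.cast_add] using this
    refine hg.of_nonneg_of_le (fun n => by positivity) (fun n => ?_)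
    have h1 : ((n:ℝ)+1) ^ (-ν) = (((n:ℝ)+1)^2) ^ (-(ν/2)) := by
      rw [← Real.rpow_natCast (((n:ℝ)+1)) 2, ← Real.rpow_mul (by positivity)]
      norm_num; ring_nf
    rw [h1]
    have : ((n:ℝ)+1)^2 ≤ 1 + ((n:ℕ)+1 : ℕ)^2 := by
      push_cast; nlinarith [Nat.cast_nonneg (α := ℝ) n]
    exact Real.rpow_le_rpow_of_nonpos (by positivity) (by push_cast at this ⊢; linarith)
      (by linarith)
  refine Summable.of_nat_of_neg (by simpa using hnat) ?_
  simpa using hnat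

private lemma card_lt (M : ℝ) : Nat.card {j : ℕ | (j:ℝ) < M} = ⌈M⌉₊ := by
  have : {j : ℕ | (j:ℝ) < M} = Set.Iio ⌈M⌉₊ := by ext j; simp [Nat.lt_ceil]
  rw [this, ← Finset.coe_range, Nat.card_coe_set_eq, Set.ncard_coe_finset,
    Finset.card_range]

/-- Eigenvalue counting asymptotics for exponentially decaying weights
`c·exp(−η·j^β/2)`: `N(r) = (2/η)^{1/β}·(−log r)^{1/β}·(1+o(1))` as `r → 0⁺`. -/
theorem stmt_12 (ν η β : ℝ) (hν : 1 < ν) (hη : 0 < η) (hβ : 0 < β) :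
    (∀ᶠ r : ℝ in nhdsWithin 0 (Set.Ioi 0),
      {j : ℕ | (∑' n : ℤ, (1 + (n : ℝ) ^ 2) ^ (-(ν / 2))) *
        Real.exp (-(η * (j : ℝ) ^ β) / 2) > r}.Finite) ∧
    Tendsto
      (fun r : ℝ =>
        (Nat.card {j : ℕ | (∑' n : ℤ, (1 + (n : ℝ) ^ 2) ^ (-(ν / 2))) *
            Real.exp (-(η * (j : ℝ) ^ β) / 2) > r} : ℝ) /
          ((2 / η) ^ (1 / β) * (-Real.log r) ^ (1 / β)))
      (nhdsWithin 0 (Set.Ioi 0)) (nhds 1) := by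
  have hsum := sumZ ν hν
  set c := ∑' n : ℤ, (1 + (n : ℝ) ^ 2) ^ (-(ν / 2)) with hc
  have hc1 : 1 ≤ c := by
    have h0 := Summable.le_tsum hsum 0 (fun n _ => by positivity)
    simpa using h0
  have hc0 : (0:ℝ) < c := lt_of_lt_of_le one_pos hc1
  set T : ℝ → ℝ := fun r => (2/η) * (Real.log c - Real.log r) with hT
  set M : ℝ → ℝ := fun r => T r ^ (1/β) with hM
  -- the set description for 0 < r < c
  have hset : ∀ r : ℝ, 0 < r → r < c →
      {j : ℕ | c * Real.exp (-(η * (j : ℝ) ^ β) / 2) > r} =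
        {j : ℕ | (j:ℝ) < M r} := by
    intro r hr hrc
    have hTpos : 0 < T r := by
      have := Real.log_lt_log hr hrc
      have : 0 < Real.log c - Real.log r := by linarith
      positivity
    ext j
    simp only [Set.mem_setOf_eq, gt_iff_lt, hM, one_div]
    rw [Real.lt_rpow_inv_iff_of_pos (Nat.cast_nonneg j) hTpos.le hβ]
    have key : r < c * Real.exp (-(η * (j : ℝ) ^ β) / 2) ↔
        Real.log r - Real.log c < -(η * (j : ℝ) ^ β) / 2 := by
      rw [← Real.log_div hr.ne' hc0.ne']
      rw [Real.log_lt_iff_lt_exp (by positivity)]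
      rw [div_lt_iff₀ hc0, mul_comm]
    rw [key]
    have hTr : T r = 2 / η * (Real.log c - Real.log r) := rfl
    rw [hTr, div_mul_eq_mul_div, lt_div_iff₀ hη]
    constructor <;> intro h <;> nlinarith
  -- finiteness
  have hmem : Set.Ioo (0:ℝ) (min c 1) ∈ nhdsWithin (0:ℝ) (Set.Ioi 0) :=
    Ioo_mem_nhdsGT_of_mem ⟨le_refl 0, by simp [hc0, zero_lt_one]⟩
  have hfin : ∀ᶠ r : ℝ in nhdsWithin 0 (Set.Ioi 0),
      {j : ℕ | c * Real.exp (-(η * (j : ℝ) ^ β) / 2) > r}.Finite := by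
    filter_upwards [hmem] with r hr
    rw [hset r hr.1 (hr.2.trans_le (min_le_left _ _))]
    have : {j : ℕ | (j:ℝ) < M r} = Set.Iio ⌈M r⌉₊ := by ext j; simp [Nat.lt_ceil]
    rw [this]; exact Set.finite_Iio _
  refine ⟨hfin, ?_⟩
  -- M r → ∞
  have hlog : Tendsto (fun r : ℝ => -Real.log r) (nhdsWithin 0 (Set.Ioi 0)) atTop :=
    tendsto_neg_atBot_atTop.comp Real.tendsto_log_nhdsGT_zero
  have hTtop : Tendsto T (nhdsWithin 0 (Set.Ioi 0)) atTop := by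
    have : Tendsto (fun r : ℝ => Real.log c - Real.log r) (nhdsWithin 0 (Set.Ioi 0)) atTop := by
      simpa [sub_eq_add_neg] using tendsto_atTop_add_const_left _ (Real.log c) hlog
    exact this.const_mul_atTop (by positivity)
  have hMtop : Tendsto M (nhdsWithin 0 (Set.Ioi 0)) atTop :=
    (tendsto_rpow_atTop (by positivity)).comp hTtop
  -- ceil M / M → 1
  have hceil : Tendsto (fun r => (⌈M r⌉₊ : ℝ) / M r) (nhdsWithin 0 (Set.Ioi 0)) (nhds 1) :=
    tendsto_nat_ceil_div_atTop.comp hMtop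
  -- M / D → 1
  set D : ℝ → ℝ := fun r => (2 / η) ^ (1/β) * (-Real.log r) ^ (1/β) with hD
  have hratio : Tendsto (fun r => M r / D r) (nhdsWithin 0 (Set.Ioi 0)) (nhds 1) := by
    have h1 : Tendsto (fun r : ℝ => (Real.log c - Real.log r) / (-Real.log r))
        (nhdsWithin 0 (Set.Ioi 0)) (nhds 1) := by
      have h2 : Tendsto (fun r : ℝ => Real.log c * (-Real.log r)⁻¹ + 1)
          (nhdsWithin 0 (Set.Ioi 0)) (nhds 1) := by
        have := (hlog.inv_tendsto_atTop).const_mul (Real.log c)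
        simpa using (this.add tendsto_const_nhds)
      refine h2.congr' ?_
      filter_upwards [hmem] with r hr
      have hr1 : r < 1 := hr.2.trans_le (min_le_right _ _)
      have hlr : Real.log r < 0 := Real.log_neg hr.1 hr1
      field_simp [hlr.ne]
      ring
    have h3 : Tendsto (fun r : ℝ => ((Real.log c - Real.log r) / (-Real.log r)) ^ (1/β))
        (nhdsWithin 0 (Set.Ioi 0)) (nhds 1) := by
      have := h1.rpow_const (p := 1/β) (Or.inl one_ne_zero)
      simpa using this
    refine h3.congr' ?_
    filter_upwards [hmem] with r hr
    have hr1 : r < 1 := hr.2.trans_le (min_le_right _ _)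
    have hrc : r < c := hr.2.trans_le (min_le_left _ _)
    have hlr : (0:ℝ) < -Real.log r := by
      have := Real.log_neg hr.1 hr1; linarith
    have hsub : (0:ℝ) < Real.log c - Real.log r := by
      have := Real.log_lt_log hr.1 hrc; linarith
    simp only [hM, hT, hD]
    rw [Real.mul_rpow (by positivity) hsub.le,
      mul_div_mul_left _ _ (Real.rpow_pos_of_pos (by positivity) (1/β)).ne',
      ← Real.div_rpow hsub.le hlr.le]
  -- combine
  have hmul : Tendsto (fun r => (⌈M r⌉₊ : ℝ) / M r * (M r / D r))
      (nhdsWithin 0 (Set.Ioi 0)) (nhds 1) := by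
    simpa using hceil.mul hratio
  refine hmul.congr' ?_
  filter_upwards [hmem] with r hr
  have hrc : r < c := hr.2.trans_le (min_le_left _ _)
  have hMpos : 0 < M r := by
    have hTpos : 0 < T r := by
      have := Real.log_lt_log hr.1 hrc
      have : 0 < Real.log c - Real.log r := by linarith
      positivity
    exact Real.rpow_pos_of_pos hTpos _
  rw [hset r hr.1 hrc, card_lt]
  have hDr : (2 / η) ^ (1 / β) * (-Real.log r) ^ (1 / β) = D r := rfl
  rw [div_mul_div_comm, hDr, mul_comm (M r) (D r), mul_div_mul_right _ _ hMpos.ne']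
end
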